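/- arXiv:1503.02278 — 8 statements merged into one kernel-verified Lean document; each statement's English description precedes it below -/
import Mathlib

section
/- For all real numbers c₂ ∈ (0,1), q ∈ (0,1), l₀₀ ∈ [0,1), f ∈ [0,1] with l₀₀ ≤ f, and t ∈ [0,1], setting c₁ = (1−c₂)/(1 − l₀₀(1 − c₂ q)), one has c₁·c₂·q²·f + c₁·q·(1−f) + c₂·q·t ≤ q. -/
/-!
Writing `s = 1 - c₂ q`, the left-hand side is `c₁ q (1 - f s) + c₂ q t`, which decreases in `f`
and increases in `t`; at `f = l₀₀`, `t = 1` it equals `q`, because `c₁ (1 - l₀₀ s) = 1 - c₂`.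
-/

open Set

theorem stmt0_general (c₂ q l₀₀ f t : ℝ)
    (hc₂ : c₂ ∈ Ioo (0:ℝ) 1) (hq : q ∈ Ioo (0:ℝ) 1) (hl : l₀₀ ∈ Ico (0:ℝ) 1)
    (hlf : l₀₀ ≤ f) (ht : t ∈ Icc (0:ℝ) 1)
    (c₁ : ℝ) (hc₁ : c₁ = (1 - c₂) / (1 - l₀₀ * (1 - c₂ * q))) :
    c₁ * c₂ * q ^ 2 * f + c₁ * q * (1 - f) + c₂ * q * t ≤ q := by
  obtain ⟨hc₂0, hc₂1⟩ := hc₂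
  obtain ⟨hq0, hq1⟩ := hq
  set s := 1 - c₂ * q
  have hs0 : 0 ≤ s := by nlinarith
  have hs1 : s ≤ 1 := by nlinarith
  have hD : 0 < 1 - l₀₀ * s := by nlinarith [mul_le_of_le_one_right hl.1 hs1, hl.2]
  have hc₁0 : 0 ≤ c₁ := hc₁ ▸ div_nonneg (by linarith) hD.le
  have hc₁D : c₁ * (1 - l₀₀ * s) = 1 - c₂ := by rw [hc₁, div_mul_cancel₀ _ hD.ne']
  calc c₁ * c₂ * q ^ 2 * f + c₁ * q * (1 - f) + c₂ * q * t
      = c₁ * q * (1 - f * s) + c₂ * q * t := by ring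
    _ ≤ c₁ * q * (1 - l₀₀ * s) + c₂ * q * 1 := by gcongr; exact ht.2
    _ = q := by linear_combination q * hc₁D

/-- The algebraic inequality underlying the error control proofs: with
`c₁ = (1 − c₂)/(1 − l₀₀(1 − c₂q))`, for any `f ∈ [0,1]` with `l₀₀ ≤ f` and any `t ∈ [0,1]`,
`c₁c₂q²f + c₁q(1−f) + c₂qt ≤ q`. -/
theorem stmt0 (c₂ q l₀₀ f t : ℝ)
    (hc₂ : c₂ ∈ Ioo (0:ℝ) 1) (hq : q ∈ Ioo (0:ℝ) 1) (hl : l₀₀ ∈ Ico (0:ℝ) 1)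
    (hf : f ∈ Icc (0:ℝ) 1) (hlf : l₀₀ ≤ f) (ht : t ∈ Icc (0:ℝ) 1)
    (c₁ : ℝ) (hc₁ : c₁ = (1 - c₂) / (1 - l₀₀ * (1 - c₂ * q))) :
    c₁ * c₂ * q ^ 2 * f + c₁ * q * (1 - f) + c₂ * q * t ≤ q :=
  stmt0_general c₂ q l₀₀ f t hc₂ hq hl hlf ht c₁ hc₁
end

section
/- Fix integers m ≥ 1 and R₁ with 1 ≤ R₁ ≤ m, parameters l₀₀ ∈ [0,1) and c₂ ∈ (0,1), and p₁, p₂ ∈ [0,1] with max(p₁,p₂) > 0. Define c₁(x) = (1−c₂)/(1 − l₀₀(1 − c₂ x)) for x ∈ (0,1), e(x) = max( p₁/c₁(x), R₁·p₂/(m·c₂) ), and f(x) = m·e(x). Then f is continuous on (0,1), the function x ↦ f(x)/x is strictly decreasing on (0,1), and the equation f(x) = x has at most one solution x ∈ (0,1). -/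
/-!
Writing `D(x) = 1 - l₀₀(1 - c₂x)` and `B = R₁p₂/(mc₂)`, one has
`f(x)/x = m · max (p₁/(1 - c₂) · D(x)/x, B/x)`. Both `D(x)/x = (1 - l₀₀)/x + l₀₀c₂` and `1/x`
are positive and strictly decreasing on `(0, ∞)`, and the coefficients are nonnegative and not
both zero, so `f(x)/x` is strictly decreasing; a fixed point of `f` is a solution of
`f(x)/x = 1`, hence unique.
-/

open Set

/-- A coefficient that vanishes makes its term `0`, which still lies below the positive maximum. -/
theorem StrictAntiOn.max_mul_mul {s : Set ℝ} {φ ψ : ℝ → ℝ} {a b : ℝ}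
    (hφ : StrictAntiOn φ s) (hψ : StrictAntiOn ψ s) (hφ₀ : ∀ x ∈ s, 0 < φ x)
    (hψ₀ : ∀ x ∈ s, 0 < ψ x) (ha : 0 ≤ a) (hb : 0 ≤ b) (hab : 0 < max a b) :
    StrictAntiOn (fun x => max (a * φ x) (b * ψ x)) s := by
  intro x hx y hy hxy
  have hM : 0 < max (a * φ x) (b * ψ x) := by
    rcases lt_max_iff.1 hab with ha' | hb'
    · exact lt_max_of_lt_left (mul_pos ha' (hφ₀ x hx))
    · exact lt_max_of_lt_right (mul_pos hb' (hψ₀ x hx))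
  refine max_lt ?_ ?_
  · rcases ha.eq_or_lt with rfl | ha'
    · simpa using hM
    · exact (mul_lt_mul_of_pos_left (hφ hx hy hxy) ha').trans_le (le_max_left _ _)
  · rcases hb.eq_or_lt with rfl | hb'
    · simpa using hM
    · exact (mul_lt_mul_of_pos_left (hψ hx hy hxy) hb').trans_le (le_max_right _ _)

theorem strictAntiOn_div_add_const {a : ℝ} (ha : 0 < a) (b : ℝ) :
    StrictAntiOn (fun x => a / x + b) (Ioi 0) := by
  intro x hx y hy hxy
  simpa using div_lt_div_of_pos_left ha hx hxy

theorem StrictAntiOn.eq_of_apply_eq_self {f : ℝ → ℝ} {s : Set ℝ}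
    (hf : StrictAntiOn (fun x => f x / x) s) {x y : ℝ} (hx : x ∈ s) (hy : y ∈ s)
    (hx₀ : x ≠ 0) (hy₀ : y ≠ 0) (hfx : f x = x) (hfy : f y = y) : x = y :=
  hf.injOn hx hy (by simp only [hfx, hfy, div_self hx₀, div_self hy₀])

theorem stmt1_general (m R₁ : ℕ) (hm : 1 ≤ m) (hR₁ : 1 ≤ R₁)
    (l₀₀ c₂ : ℝ) (hl : l₀₀ ∈ Ico (0:ℝ) 1) (hc : c₂ ∈ Ioo (0:ℝ) 1)
    (p₁ p₂ : ℝ) (hp₁ : p₁ ∈ Icc (0:ℝ) 1) (hp₂ : p₂ ∈ Icc (0:ℝ) 1)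
    (hpos : 0 < max p₁ p₂)
    (c₁ : ℝ → ℝ) (hc₁ : ∀ x, c₁ x = (1 - c₂) / (1 - l₀₀ * (1 - c₂ * x)))
    (e : ℝ → ℝ) (he : ∀ x, e x = max (p₁ / c₁ x) ((R₁ : ℝ) * p₂ / ((m : ℝ) * c₂)))
    (f : ℝ → ℝ) (hf : ∀ x, f x = (m : ℝ) * e x) :
    ContinuousOn f (Ioo (0:ℝ) 1) ∧
    StrictAntiOn (fun x => f x / x) (Ioo (0:ℝ) 1) ∧
    (∀ x ∈ Ioo (0:ℝ) 1, ∀ y ∈ Ioo (0:ℝ) 1, f x = x → f y = y → x = y) := by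
  obtain ⟨hl₀, hl₁⟩ := hl
  obtain ⟨hc₂₀, hc₂₁⟩ := hc
  have hm₀ : (0:ℝ) < m := by exact_mod_cast hm
  set B := (R₁ : ℝ) * p₂ / ((m : ℝ) * c₂)
  have hf_eq : f = fun x => m * max (p₁ / (1 - c₂) * (1 - l₀₀ * (1 - c₂ * x))) B := by
    funext x
    rw [hf, he, hc₁, div_div_eq_mul_div, mul_div_right_comm]
  have hf_div : ∀ x > 0, f x / x =
      m * max (p₁ / (1 - c₂) * ((1 - l₀₀) / x + l₀₀ * c₂)) (B * x⁻¹) := by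
    intro x hx
    rw [hf_eq, mul_div_assoc, ← max_div_div_right hx.le]
    congr 2
    field_simp
    ring
  have hB : 0 ≤ B := by have := hp₂.1; positivity
  have hcoef : 0 < max (p₁ / (1 - c₂)) B := by
    rcases lt_max_iff.1 hpos with h | h
    · exact lt_max_of_lt_left (div_pos h (by linarith))
    · exact lt_max_of_lt_right (by positivity)
  have hanti : StrictAntiOn (fun x => f x / x) (Ioi 0) := by
    have hmax := (strictAntiOn_div_add_const (sub_pos.2 hl₁) (l₀₀ * c₂)).max_mul_mul
      strictAntiOn_inv_pos (fun x hx => by have := mem_Ioi.1 hx; positivity)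
      (fun x hx => inv_pos.2 hx) (div_nonneg hp₁.1 (by linarith)) hB hcoef
    intro x hx y hy hxy
    simp only [hf_div x hx, hf_div y hy]
    exact mul_lt_mul_of_pos_left (hmax hx hy hxy) hm₀
  refine ⟨?_, hanti.mono Ioo_subset_Ioi_self, fun x hx y hy hfx hfy => ?_⟩
  · rw [hf_eq]
    fun_prop
  · exact hanti.eq_of_apply_eq_self hx.1 hy.1 hx.1.ne' hy.1.ne' hfx hfy

/-- The Bonferroni r-value function `f(x) = m·max(p₁/c₁(x), R₁p₂/(mc₂))` is continuous
on `(0,1)`, `x ↦ f(x)/x` is strictly decreasing on `(0,1)`, and `f(x) = x` has at most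
one solution in `(0,1)`. -/
theorem stmt1 (m R₁ : ℕ) (hm : 1 ≤ m) (hR₁ : 1 ≤ R₁) (hR₁m : R₁ ≤ m)
    (l₀₀ c₂ : ℝ) (hl : l₀₀ ∈ Ico (0:ℝ) 1) (hc : c₂ ∈ Ioo (0:ℝ) 1)
    (p₁ p₂ : ℝ) (hp₁ : p₁ ∈ Icc (0:ℝ) 1) (hp₂ : p₂ ∈ Icc (0:ℝ) 1)
    (hpos : 0 < max p₁ p₂)
    (c₁ : ℝ → ℝ) (hc₁ : ∀ x, c₁ x = (1 - c₂) / (1 - l₀₀ * (1 - c₂ * x)))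
    (e : ℝ → ℝ) (he : ∀ x, e x = max (p₁ / c₁ x) ((R₁ : ℝ) * p₂ / ((m : ℝ) * c₂)))
    (f : ℝ → ℝ) (hf : ∀ x, f x = (m : ℝ) * e x) :
    ContinuousOn f (Ioo (0:ℝ) 1) ∧
    StrictAntiOn (fun x => f x / x) (Ioo (0:ℝ) 1) ∧
    (∀ x ∈ Ioo (0:ℝ) 1, ∀ y ∈ Ioo (0:ℝ) 1, f x = x → f y = y → x = y) :=
  stmt1_general m R₁ hm hR₁ l₀₀ c₂ hl hc p₁ p₂ hp₁ hp₂ hpos c₁ hc₁ e he f hf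
end

section
/- Let g : (0,1) → ℝ be continuous, suppose x ↦ g(x)/x is strictly decreasing on (0,1), and suppose there exists c > 0 with g(x) ≥ c for all x ∈ (0,1). Define r = the unique solution in (0,1) of g(x) = x if one exists, and r = 1 otherwise. Then for every α ∈ (0,1): r ≤ α if and only if g(α) ≤ α. -/
/-!
At a fixed point `r` the ratio `g x / x` equals `1`, so its strict decrease puts `g` on or below
the diagonal exactly to the right of `r`. Without a fixed point, `g` stays above the diagonal:
near `0` we have `g x ≥ c > x`, so a point `α` with `g α ≤ α` would give a fixed point in `(0, α]`
by the intermediate value theorem.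
-/

open Set

theorem le_iff_apply_le_of_strictAntiOn_div {g : ℝ → ℝ} {s : Set ℝ} {r α : ℝ}
    (hanti : StrictAntiOn (fun x => g x / x) s) (hr : r ∈ s) (hα : α ∈ s)
    (hr0 : 0 < r) (hα0 : 0 < α) (hfix : g r = r) : r ≤ α ↔ g α ≤ α := by
  have hdiv : g α / α ≤ g r / r ↔ r ≤ α := hanti.le_iff_ge hα hr
  rw [← hdiv, hfix, div_self hr0.ne', div_le_one hα0]

theorem exists_mem_Ioc_apply_eq_self {g : ℝ → ℝ} {c α : ℝ} (hα0 : 0 < α)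
    (hcont : ContinuousOn g (Ioc 0 α)) (hc : 0 < c) (hg : ∀ x ∈ Ioc 0 α, c ≤ g x)
    (hgα : g α ≤ α) : ∃ x ∈ Ioc 0 α, g x = x := by
  set x₀ := min c α / 2 with hx₀_def
  have hx₀ : x₀ ∈ Ioc 0 α := ⟨by positivity, by linarith [min_le_right c α]⟩
  have hx₀c : x₀ < c := by linarith [min_le_left c α]
  have hsub : Icc x₀ α ⊆ Ioc 0 α := fun y hy => ⟨hx₀.1.trans_le hy.1, hy.2⟩
  have hsign : (0 : ℝ) ∈ Icc (g α - α) (g x₀ - x₀) :=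
    ⟨by linarith, by linarith [hg x₀ hx₀]⟩
  obtain ⟨x, hx, hx0⟩ :=
    intermediate_value_Icc' hx₀.2 ((hcont.mono hsub).sub continuousOn_id) hsign
  exact ⟨x, hsub hx, sub_eq_zero.mp hx0⟩

/-- Equivalence of the two forms of the thresholding procedure: if `g` is continuous on
`(0,1)`, `x ↦ g(x)/x` is strictly decreasing on `(0,1)`, and `g` is bounded below by a
positive constant, then with `r` the unique fixed point of `g` in `(0,1)` if one exists
and `r = 1` otherwise, for every `α ∈ (0,1)` we have `r ≤ α ↔ g(α) ≤ α`. -/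
theorem stmt3 (g : ℝ → ℝ) (hcont : ContinuousOn g (Ioo (0:ℝ) 1))
    (hanti : StrictAntiOn (fun x => g x / x) (Ioo (0:ℝ) 1))
    (c : ℝ) (hc : 0 < c) (hg : ∀ x ∈ Ioo (0:ℝ) 1, c ≤ g x)
    (r : ℝ)
    (hr : (r ∈ Ioo (0:ℝ) 1 ∧ g r = r) ∨ ((¬ ∃ x ∈ Ioo (0:ℝ) 1, g x = x) ∧ r = 1)) :
    ∀ α ∈ Ioo (0:ℝ) 1, (r ≤ α ↔ g α ≤ α) := by
  intro α hα
  rcases hr with ⟨hr, hfix⟩ | ⟨hnofix, rfl⟩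
  · exact le_iff_apply_le_of_strictAntiOn_div hanti hr hα hr.1 hα.1 hfix
  · have hsub : Ioc 0 α ⊆ Ioo (0:ℝ) 1 := fun y hy => ⟨hy.1, hy.2.trans_lt hα.2⟩
    refine ⟨fun h => absurd hα.2 h.not_gt, fun hgα => ?_⟩
    obtain ⟨x, hx, hfix⟩ := exists_mem_Ioc_apply_eq_self hα.1 (hcont.mono hsub) hc
      (fun x hx => hg x (hsub hx)) hgα
    exact absurd ⟨x, hsub hx, hfix⟩ hnofix
end

section
/- Fix an integer m ≥ 1, a nonempty set R₁ ⊆ {1,…,m}, values p₁ⱼ ∈ (0,1] and p₂ⱼ ∈ (0,1] for j ∈ R₁, parameters l₀₀ ∈ [0,1), c₂ ∈ (0,1), and a level q ∈ (0,1). Define c₁(x) = (1−c₂)/(1 − l₀₀(1 − c₂x)); for j ∈ R₁ let eⱼ(x) = max( p₁ⱼ/c₁(x), |R₁|·p₂ⱼ/(m·c₂) ); let rank[eⱼ(x)] be the rank of eⱼ(x) among {eᵢ(x) : i ∈ R₁} (with maximum rank for ties); let fᵢ(x) = min over {j ∈ R₁ : eⱼ(x) ≥ eᵢ(x)} of eⱼ(x)·m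 / rank[eⱼ(x)]; and let rᵢ = the solution in (0,1) of fᵢ(r) = r if one exists, and rᵢ = 1 otherwise. Let R₂ = max{ r ∈ {1,…,m} : #{ j ∈ R₁ : p₁ⱼ ≤ r·c₁(q)·q/m and p₂ⱼ ≤ r·c₂·q/|R₁| } = r }, with R₂ = 0 if no such r exists. Then { i ∈ R₁ : rᵢ ≤ q } = { j ∈ R₁ : p₁ⱼ ≤ R₂·c₁(q)·q/m and p₂ⱼ ≤ R₂·c₂·q/|R₁| }. -/
/-!
Write `Selᵢ(x)` for "the Benjamini–Hochberg step-up procedure at level `x`, run on the scores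
`eⱼ(x)`, selects `i`". Choosing `j` with the largest score under a threshold shows
`fᵢ(x) ≤ x ↔ Selᵢ(x)`, and `fᵢ(x) < x ↔` the same with strict inequalities. Every `eⱼ(x) / x`
is strictly decreasing, so once `Selᵢ` holds at some level it holds strictly at all higher
levels; moreover `Selᵢ` is a closed condition in `x` and its strict form an open one. Hence a
fixed point `rᵢ` of `fᵢ` satisfies `rᵢ ≤ q ↔ Selᵢ(q)`, and if `Selᵢ(q)` holds, the least level at
which `Selᵢ` holds is a fixed point in `(0, q]`, so `rᵢ = 1` forces `¬ Selᵢ(q)`. Finally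
`eⱼ(q) ≤ s q / m` is exactly the pair of p-value conditions at `s`, and the step-up procedure
selects precisely the features below its largest self-consistent threshold `R₂ q / m`.
-/

open Set
open scoped Finset

section StepUp

variable {ι : Type*}

/-- Selection of `i` by the Benjamini–Hochberg step-up procedure with thresholds `k * x / c`:
selection through any `k` with at least `k` values below its threshold is equivalent to selection
through the largest such `k`. -/
def StepUpSelects (s : Finset ι) (v : ι → ℝ) (c x : ℝ) (i : ι) : Prop :=
  ∃ k ∈ Finset.Icc 1 #s, v i ≤ k * x / c ∧ k ≤ #{j ∈ s | v j ≤ k * x / c}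

def StepUpSelectsStrict (s : Finset ι) (v : ι → ℝ) (c x : ℝ) (i : ι) : Prop :=
  ∃ k ∈ Finset.Icc 1 #s, v i < k * x / c ∧ k ≤ #{j ∈ s | v j < k * x / c}

variable {s : Finset ι} {v : ι → ℝ} {c x : ℝ} {i : ι}

lemma StepUpSelectsStrict.stepUpSelects (h : StepUpSelectsStrict s v c x i) :
    StepUpSelects s v c x i := by
  obtain ⟨k, hk, hvi, hcard⟩ := h
  exact ⟨k, hk, hvi.le,
    hcard.trans <| Finset.card_le_card <| s.monotone_filter_right fun _ _ h => h.le⟩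

lemma exists_max_of_le_card_filter {p : ℝ → Prop} [DecidablePred p] {k : ℕ} (hk : 1 ≤ k)
    (h : k ≤ #{j ∈ s | p (v j)}) :
    ∃ j ∈ s, p (v j) ∧ (∀ j' ∈ s, p (v j') → v j' ≤ v j) ∧ k ≤ #{j' ∈ s | v j' ≤ v j} := by
  obtain ⟨j, hj, hmax⟩ := Finset.exists_max_image _ v (Finset.card_pos.1 (hk.trans h))
  simp only [Finset.mem_filter] at hj hmax
  refine ⟨j, hj.1, hj.2, fun j' hj' hpj' => hmax j' ⟨hj', hpj'⟩, ?_⟩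
  exact h.trans <| Finset.card_le_card <|
    s.monotone_filter_right fun j' hj' hpj' => hmax j' ⟨hj', hpj'⟩

lemma isLeast_le_iff_stepUpSelects (hc : 0 < c) (hx : 0 ≤ x) (hi : i ∈ s) {F : ℝ}
    (hF : IsLeast (({j ∈ s | v i ≤ v j}.image fun j => v j * c / #{j' ∈ s | v j' ≤ v j}) :
      Set ℝ) F) :
    F ≤ x ↔ StepUpSelects s v c x i := by
  constructor
  · intro hFx
    obtain ⟨j, hj, rfl⟩ := Finset.mem_image.1 hF.1
    rw [Finset.mem_filter] at hj
    have hrank : (0 : ℝ) < #{j' ∈ s | v j' ≤ v j} := by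
      exact_mod_cast Finset.card_pos.2 ⟨j, Finset.mem_filter.2 ⟨hj.1, le_refl (v j)⟩⟩
    have hvj : v j ≤ #{j' ∈ s | v j' ≤ v j} * x / c := by
      rw [div_le_iff₀ hrank] at hFx
      rw [le_div_iff₀ hc]
      linarith
    refine ⟨_, Finset.mem_Icc.2 ⟨by exact_mod_cast hrank, Finset.card_filter_le _ _⟩,
      hj.2.trans hvj, Finset.card_le_card <| s.monotone_filter_right fun _ _ h => h.trans hvj⟩
  · rintro ⟨k, hk, hvi, hcard⟩
    obtain ⟨j, hj, hvj, hmax, hkj⟩ :=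
      exists_max_of_le_card_filter (p := (· ≤ k * x / c)) (Finset.mem_Icc.1 hk).1 hcard
    refine (hF.2 (Finset.mem_image_of_mem _ (Finset.mem_filter.2 ⟨hj, hmax i hi hvi⟩))).trans ?_
    have hk0 : (0 : ℝ) < k := by exact_mod_cast (Finset.mem_Icc.1 hk).1
    have hkj' : (k : ℝ) ≤ #{j' ∈ s | v j' ≤ v j} := by exact_mod_cast hkj
    rw [div_le_iff₀ (hk0.trans_le hkj')]
    rw [le_div_iff₀ hc] at hvj
    nlinarith

lemma isLeast_lt_iff_stepUpSelectsStrict (hc : 0 < c) (hx : 0 ≤ x) (hi : i ∈ s) {F : ℝ}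
    (hF : IsLeast (({j ∈ s | v i ≤ v j}.image fun j => v j * c / #{j' ∈ s | v j' ≤ v j}) :
      Set ℝ) F) :
    F < x ↔ StepUpSelectsStrict s v c x i := by
  constructor
  · intro hFx
    obtain ⟨j, hj, rfl⟩ := Finset.mem_image.1 hF.1
    rw [Finset.mem_filter] at hj
    have hrank : (0 : ℝ) < #{j' ∈ s | v j' ≤ v j} := by
      exact_mod_cast Finset.card_pos.2 ⟨j, Finset.mem_filter.2 ⟨hj.1, le_refl (v j)⟩⟩
    have hvj : v j < #{j' ∈ s | v j' ≤ v j} * x / c := by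
      rw [div_lt_iff₀ hrank] at hFx
      rw [lt_div_iff₀ hc]
      linarith
    refine ⟨_, Finset.mem_Icc.2 ⟨by exact_mod_cast hrank, Finset.card_filter_le _ _⟩,
      hj.2.trans_lt hvj,
      Finset.card_le_card <| s.monotone_filter_right fun _ _ h => h.trans_lt hvj⟩
  · rintro ⟨k, hk, hvi, hcard⟩
    obtain ⟨j, hj, hvj, hmax, hkj⟩ :=
      exists_max_of_le_card_filter (p := (· < k * x / c)) (Finset.mem_Icc.1 hk).1 hcard
    refine (hF.2 (Finset.mem_image_of_mem _ (Finset.mem_filter.2 ⟨hj, hmax i hi hvi⟩))).trans_lt ?_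
    have hk0 : (0 : ℝ) < k := by exact_mod_cast (Finset.mem_Icc.1 hk).1
    have hkj' : (k : ℝ) ≤ #{j' ∈ s | v j' ≤ v j} := by exact_mod_cast hkj
    rw [div_lt_iff₀ (hk0.trans_le hkj')]
    rw [lt_div_iff₀ hc] at hvj
    nlinarith

end StepUp

section Topology

variable {X ι : Type*}

lemma setOf_le_card_filter_eq (s : Finset ι) (p : ι → X → Prop) [∀ j x, Decidable (p j x)]
    (k : ℕ) : {x | k ≤ #{j ∈ s | p j x}} = ⋃ t ∈ s.powersetCard k, ⋂ j ∈ t, {x | p j x} := by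
  ext x
  simp only [mem_ofPred_eq, mem_iUnion, mem_iInter, Finset.mem_powersetCard, exists_prop]
  constructor
  · intro h
    obtain ⟨t, hts, htk⟩ := Finset.exists_subset_card_eq h
    exact ⟨t, ⟨hts.trans (Finset.filter_subset _ _), htk⟩,
      fun j hj => (Finset.mem_filter.1 (hts hj)).2⟩
  · rintro ⟨t, ⟨hts, rfl⟩, hp⟩
    exact Finset.card_le_card fun j hj => Finset.mem_filter.2 ⟨hts hj, hp j hj⟩

lemma isClosed_setOf_le_card_filter [TopologicalSpace X] (s : Finset ι) {p : ι → X → Prop}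
    [∀ j x, Decidable (p j x)]
    (hp : ∀ j ∈ s, IsClosed {x | p j x}) (k : ℕ) : IsClosed {x | k ≤ #{j ∈ s | p j x}} := by
  rw [setOf_le_card_filter_eq]
  exact isClosed_biUnion_finset fun t ht =>
    isClosed_biInter fun j hj => hp j ((Finset.mem_powersetCard.1 ht).1 hj)

lemma isOpen_setOf_le_card_filter [TopologicalSpace X] (s : Finset ι) {p : ι → X → Prop}
    [∀ j x, Decidable (p j x)]
    (hp : ∀ j ∈ s, IsOpen {x | p j x}) (k : ℕ) : IsOpen {x | k ≤ #{j ∈ s | p j x}} := by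
  rw [setOf_le_card_filter_eq]
  exact isOpen_biUnion fun t ht =>
    isOpen_biInter_finset fun j hj => hp j ((Finset.mem_powersetCard.1 ht).1 hj)

end Topology

section Selection

variable {ι : Type*} {s : Finset ι} {e : ι → ℝ → ℝ} {c : ℝ} {i : ι}

lemma isClosed_setOf_stepUpSelects (hcont : ∀ j ∈ s, Continuous (e j)) (hi : i ∈ s) :
    IsClosed {x | StepUpSelects s (e · x) c x i} := by
  have : {x | StepUpSelects s (e · x) c x i} = ⋃ k ∈ Finset.Icc 1 #s,
      {x | e i x ≤ k * x / c} ∩ {x | k ≤ #{j ∈ s | e j x ≤ k * x / c}} := by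
    ext x; simp [StepUpSelects, and_left_comm]
  rw [this]
  exact isClosed_biUnion_finset fun k _ =>
    (isClosed_le (hcont i hi) (by fun_prop)).inter <|
      isClosed_setOf_le_card_filter s (fun j hj => isClosed_le (hcont j hj) (by fun_prop)) k

lemma isOpen_setOf_stepUpSelectsStrict (hcont : ∀ j ∈ s, Continuous (e j)) (hi : i ∈ s) :
    IsOpen {x | StepUpSelectsStrict s (e · x) c x i} := by
  have : {x | StepUpSelectsStrict s (e · x) c x i} = ⋃ k ∈ Finset.Icc 1 #s,
      {x | e i x < k * x / c} ∩ {x | k ≤ #{j ∈ s | e j x < k * x / c}} := by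
    ext x; simp [StepUpSelectsStrict, and_left_comm]
  rw [this]
  exact isOpen_biUnion fun k _ =>
    (isOpen_lt (hcont i hi) (by fun_prop)).inter <|
      isOpen_setOf_le_card_filter s (fun j hj => isOpen_lt (hcont j hj) (by fun_prop)) k

lemma pos_of_stepUpSelects {v : ι → ℝ} {x : ℝ} (hc : 0 < c) (hvi : 0 < v i)
    (h : StepUpSelects s v c x i) : 0 < x := by
  obtain ⟨k, -, hvk, -⟩ := h
  by_contra! hx
  have : (k : ℝ) * x / c ≤ 0 :=
    div_nonpos_of_nonpos_of_nonneg (mul_nonpos_of_nonneg_of_nonpos k.cast_nonneg hx) hc.le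
  linarith

lemma stepUpSelectsStrict_of_lt
    (hanti : ∀ j ∈ s, StrictAntiOn (fun x => e j x / x) (Ioi 0)) (hi : i ∈ s) {x y : ℝ}
    (hx : 0 < x) (hxy : x < y) (h : StepUpSelects s (e · x) c x i) :
    StepUpSelectsStrict s (e · y) c y i := by
  have key : ∀ j ∈ s, ∀ k : ℕ, e j x ≤ k * x / c → e j y < k * y / c := by
    intro j hj k hjk
    have hy : 0 < y := hx.trans hxy
    rw [mul_div_right_comm, ← div_le_iff₀ hx] at hjk
    rw [mul_div_right_comm, ← div_lt_iff₀ hy]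
    exact (hanti j hj hx hy hxy).trans_le hjk
  obtain ⟨k, hk, hvi, hcard⟩ := h
  exact ⟨k, hk, key i hi k hvi,
    hcard.trans <| Finset.card_le_card <| s.monotone_filter_right fun j hj => key j hj k⟩

variable (hc : 0 < c) (hcont : ∀ j ∈ s, Continuous (e j)) (hi : i ∈ s) {f : ℝ → ℝ}
  (hf : ∀ x, IsLeast (({j ∈ s | e i x ≤ e j x}.image
    fun j => e j x * c / #{j' ∈ s | e j' x ≤ e j x}) : Set ℝ) (f x))
include hc hcont hi hf

lemma exists_fixedPoint_of_stepUpSelects (hpos : ∀ x, 0 < e i x) {q : ℝ}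
    (hq : StepUpSelects s (e · q) c q i) : ∃ x ∈ Ioc 0 q, f x = x := by
  set S := {x | StepUpSelects s (e · x) c x i}
  have hS_pos : ∀ x ∈ S, 0 < x := fun x hx =>
    pos_of_stepUpSelects (v := (e · x)) hc (hpos x) hx
  have hbdd : BddBelow S := ⟨0, fun x hx => (hS_pos x hx).le⟩
  have hx₀ : sInf S ∈ S := (isClosed_setOf_stepUpSelects hcont hi).csInf_mem ⟨q, hq⟩ hbdd
  have hx₀pos := hS_pos _ hx₀
  refine ⟨sInf S, ⟨hx₀pos, csInf_le hbdd hq⟩,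
    le_antisymm ((isLeast_le_iff_stepUpSelects hc hx₀pos.le hi (hf _)).2 hx₀)
      (not_lt.1 fun hlt => ?_)⟩
  have hnhds := (isOpen_setOf_stepUpSelectsStrict hcont hi).mem_nhds
    ((isLeast_lt_iff_stepUpSelectsStrict hc hx₀pos.le hi (hf _)).1 hlt)
  -- strict selection is an open condition, so it would persist below the infimum
  obtain ⟨y, hy, hyS⟩ := Filter.Eventually.exists_lt hnhds
  exact (csInf_le hbdd hyS.stepUpSelects).not_gt hy

lemma le_iff_stepUpSelects (hpos : ∀ x, 0 < e i x)
    (hanti : ∀ j ∈ s, StrictAntiOn (fun x => e j x / x) (Ioi 0)) {r q : ℝ} (hq : q ∈ Ioo 0 1)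
    (hr : (r ∈ Ioo 0 1 ∧ f r = r) ∨ ((¬ ∃ x ∈ Ioo 0 1, f x = x) ∧ r = 1)) :
    r ≤ q ↔ StepUpSelects s (e · q) c q i := by
  rcases hr with ⟨⟨hr0, -⟩, hfix⟩ | ⟨hnone, rfl⟩
  · have hsel : StepUpSelects s (e · r) c r i :=
      (isLeast_le_iff_stepUpSelects hc hr0.le hi (hf r)).1 hfix.le
    refine ⟨fun hrq => ?_, fun hselq => not_lt.1 fun hlt => ?_⟩
    · rcases hrq.eq_or_lt with rfl | hlt
      · exact hsel
      · exact (stepUpSelectsStrict_of_lt hanti hi hr0 hlt hsel).stepUpSelects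
    · exact hfix.not_lt ((isLeast_lt_iff_stepUpSelectsStrict hc hr0.le hi (hf r)).2
        (stepUpSelectsStrict_of_lt hanti hi hq.1 hlt hselq))
  · refine iff_of_false (not_le.2 hq.2) fun hsel => hnone ?_
    obtain ⟨x, hx, hfx⟩ := exists_fixedPoint_of_stepUpSelects hc hcont hi hf hpos hsel
    exact ⟨x, ⟨hx.1, hx.2.trans_lt hq.2⟩, hfx⟩

end Selection

section StepUpCount

variable {ι : Type*} {s : Finset ι} {v : ι → ℝ} {c x : ℝ} {i : ι}

lemma Monotone.exists_ge_eq_self {N : ℕ → ℕ} (hN : Monotone N) {M : ℕ} (hM : ∀ n, N n ≤ M)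
    {k : ℕ} (hk : k ≤ N k) : ∃ K, k ≤ K ∧ N K = K := by
  classical
  have hkM : k ≤ M := hk.trans (hM k)
  set K := Nat.findGreatest (fun n => n ≤ N n) M
  have hK : K ≤ N K := Nat.findGreatest_spec (P := fun n => n ≤ N n) hkM hk
  refine ⟨K, Nat.le_findGreatest (P := fun n => n ≤ N n) hkM hk,
    le_antisymm (not_lt.1 fun hlt => ?_) hK⟩
  exact Nat.findGreatest_is_greatest (lt_add_one K) (hlt.trans_le (hM K))
    (hlt.trans_le (hN K.le_succ))

lemma stepUpSelects_iff_le {m : ℕ} (hc : 0 < c) (hx : 0 ≤ x) (hs : #s ≤ m) (hvi : 0 < v i)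
    {R : ℕ} (hR : (R ∈ Finset.Icc 1 m ∧ #{j ∈ s | v j ≤ R * x / c} = R ∧
        ∀ n ∈ Finset.Icc 1 m, #{j ∈ s | v j ≤ n * x / c} = n → n ≤ R) ∨
      (R = 0 ∧ ∀ n ∈ Finset.Icc 1 m, #{j ∈ s | v j ≤ n * x / c} ≠ n)) :
    StepUpSelects s v c x i ↔ v i ≤ R * x / c := by
  have hthresh : Monotone fun n : ℕ => (n : ℝ) * x / c := fun a b hab => by
    dsimp only; gcongr
  have hcount : Monotone fun n : ℕ => #{j ∈ s | v j ≤ n * x / c} := fun a b hab =>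
    Finset.card_le_card <| s.monotone_filter_right fun _ _ h => h.trans (hthresh hab)
  constructor
  · rintro ⟨k, hk, hvk, hcard⟩
    obtain ⟨hk1, -⟩ := Finset.mem_Icc.1 hk
    obtain ⟨K, hkK, hK⟩ :=
      hcount.exists_ge_eq_self (fun n => (Finset.card_filter_le _ _).trans hs) hcard
    have hKm : K ∈ Finset.Icc 1 m :=
      Finset.mem_Icc.2 ⟨hk1.trans hkK, hK ▸ (Finset.card_filter_le _ _).trans hs⟩
    rcases hR with ⟨-, -, hmax⟩ | ⟨-, hnone⟩
    · exact hvk.trans (hthresh (hkK.trans (hmax K hKm hK)))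
    · exact absurd hK (hnone K hKm)
  · intro hvR
    rcases hR with ⟨hR, hcard, -⟩ | ⟨rfl, -⟩
    · exact ⟨R, Finset.mem_Icc.2 ⟨(Finset.mem_Icc.1 hR).1, hcard ▸ Finset.card_filter_le _ _⟩,
        hvR, hcard.ge⟩
    · simp only [Nat.cast_zero, zero_mul, zero_div] at hvR
      exact absurd hvR hvi.not_ge

end StepUpCount

section Replicability

variable {ι : Type*}

lemma strictAntiOn_max_affine_div {α β A : ℝ} (hα : 0 < α) (hA : 0 < A) :
    StrictAntiOn (fun x => max (α + β * x) A / x) (Ioi 0) := by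
  intro x hx y hy hxy
  simp only
  rw [div_lt_div_iff₀ hy hx, max_mul_of_nonneg _ _ hx.le, max_mul_of_nonneg _ _ hy.le]
  exact max_lt_max (by nlinarith) (by nlinarith)

variable {p₁ A : ι → ℝ} {l c : ℝ} {c₁ : ℝ → ℝ} {e : ι → ℝ → ℝ}

lemma eq_max_affine (hc₁ : ∀ x, c₁ x = (1 - c) / (1 - l * (1 - c * x)))
    (he : ∀ j x, e j x = max (p₁ j / c₁ x) (A j)) (j : ι) :
    e j = fun x => max (p₁ j * (1 - l) / (1 - c) + p₁ j * l * c / (1 - c) * x) (A j) := by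
  ext x
  rw [he, hc₁, div_div_eq_mul_div]
  ring_nf

lemma le_and_le_iff_max_le {a b C c₂ M N t q : ℝ} (hC : 0 < C) (hc₂ : 0 < c₂) (hM : 0 < M)
    (hN : 0 < N) :
    (a ≤ t * C * q / M ∧ b ≤ t * c₂ * q / N) ↔ max (a / C) (N * b / (M * c₂)) ≤ t * q / M := by
  rw [max_le_iff, div_le_iff₀ hC, div_le_iff₀ (mul_pos hM hc₂), le_div_iff₀ hN]
  refine and_congr (by rw [div_mul_eq_mul_div, mul_right_comm]) ?_
  rw [show t * q / M * (M * c₂) = t * c₂ * q by field_simp, mul_comm N]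

end Replicability

theorem stmt4_general (m : ℕ) (R₁ : Finset (Fin m))
    (p₁ p₂ : Fin m → ℝ)
    (hp₁ : ∀ j ∈ R₁, p₁ j ∈ Ioc (0:ℝ) 1) (hp₂ : ∀ j ∈ R₁, p₂ j ∈ Ioc (0:ℝ) 1)
    (l₀₀ c₂ : ℝ) (hl : l₀₀ ∈ Ico (0:ℝ) 1) (hc : c₂ ∈ Ioo (0:ℝ) 1)
    (q : ℝ) (hq : q ∈ Ioo (0:ℝ) 1)
    (c₁ : ℝ → ℝ) (hc₁ : ∀ x, c₁ x = (1 - c₂) / (1 - l₀₀ * (1 - c₂ * x)))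
    (e : Fin m → ℝ → ℝ)
    (he : ∀ j x, e j x = max (p₁ j / c₁ x) ((R₁.card : ℝ) * p₂ j / ((m : ℝ) * c₂)))
    (rank : Fin m → ℝ → ℕ)
    (hrank : ∀ j x, rank j x = (R₁.filter (fun i => e i x ≤ e j x)).card)
    (f : Fin m → ℝ → ℝ)
    (hf : ∀ i ∈ R₁, ∀ x : ℝ,
      IsLeast ((R₁.filter (fun j => e i x ≤ e j x)).image
        (fun j => e j x * (m : ℝ) / (rank j x : ℝ)) : Set ℝ) (f i x))
    (r : Fin m → ℝ)
    (hr : ∀ i ∈ R₁,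
      (r i ∈ Ioo (0:ℝ) 1 ∧ f i (r i) = r i) ∨
      ((¬ ∃ x ∈ Ioo (0:ℝ) 1, f i x = x) ∧ r i = 1))
    (R₂ : ℕ)
    (hR₂ : (R₂ ∈ Finset.Icc 1 m ∧
        (R₁.filter (fun j => p₁ j ≤ (R₂ : ℝ) * c₁ q * q / (m : ℝ) ∧
          p₂ j ≤ (R₂ : ℝ) * c₂ * q / (R₁.card : ℝ))).card = R₂ ∧
        (∀ s ∈ Finset.Icc 1 m,
          (R₁.filter (fun j => p₁ j ≤ (s : ℝ) * c₁ q * q / (m : ℝ) ∧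
            p₂ j ≤ (s : ℝ) * c₂ * q / (R₁.card : ℝ))).card = s → s ≤ R₂)) ∨
      (R₂ = 0 ∧ ∀ s ∈ Finset.Icc 1 m,
        (R₁.filter (fun j => p₁ j ≤ (s : ℝ) * c₁ q * q / (m : ℝ) ∧
          p₂ j ≤ (s : ℝ) * c₂ * q / (R₁.card : ℝ))).card ≠ s)) :
    R₁.filter (fun i => r i ≤ q) =
      R₁.filter (fun j => p₁ j ≤ (R₂ : ℝ) * c₁ q * q / (m : ℝ) ∧
        p₂ j ≤ (R₂ : ℝ) * c₂ * q / (R₁.card : ℝ)) := by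
  have hm : ∀ j ∈ R₁, (0 : ℝ) < m := fun j _ => by exact_mod_cast j.pos
  have hcard : ∀ j ∈ R₁, (0 : ℝ) < R₁.card := fun j hj => by
    exact_mod_cast Finset.card_pos.2 ⟨j, hj⟩
  have hA : ∀ j ∈ R₁, 0 < (R₁.card : ℝ) * p₂ j / ((m : ℝ) * c₂) := fun j hj =>
    div_pos (mul_pos (hcard j hj) (hp₂ j hj).1) (mul_pos (hm j hj) hc.1)
  have he_pos : ∀ j ∈ R₁, ∀ x, 0 < e j x := fun j hj x =>
    (hA j hj).trans_le (he j x ▸ le_max_right _ _)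
  have he_cont : ∀ j, Continuous (e j) := fun j => by rw [eq_max_affine hc₁ he j]; fun_prop
  have he_anti : ∀ j ∈ R₁, StrictAntiOn (fun x => e j x / x) (Ioi 0) := fun j hj => by
    rw [eq_max_affine hc₁ he j]
    exact strictAntiOn_max_affine_div
      (div_pos (mul_pos (hp₁ j hj).1 (by linarith [hl.2])) (by linarith [hc.2])) (hA j hj)
  have hc₁q : 0 < c₁ q := by
    rw [hc₁]
    exact div_pos (by linarith [hc.2])
      (by nlinarith [mul_nonneg hl.1 (mul_nonneg hc.1.le hq.1.le), hl.2])
  have hfilter : ∀ n : ℕ, R₁.filter (fun j => p₁ j ≤ (n : ℝ) * c₁ q * q / m ∧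
      p₂ j ≤ (n : ℝ) * c₂ * q / R₁.card) = {j ∈ R₁ | e j q ≤ n * q / m} := fun n =>
    Finset.filter_congr fun j hj => by
      rw [he, le_and_le_iff_max_le hc₁q hc.1 (hm j hj) (hcard j hj)]
  simp only [hfilter] at hR₂ ⊢
  simp only [hrank] at hf
  refine Finset.filter_congr fun i hi => ?_
  rw [le_iff_stepUpSelects (hm i hi) (fun j _ => he_cont j) hi (hf i hi) (he_pos i hi) he_anti
    hq (hr i hi)]
  exact stepUpSelects_iff_le (hm i hi) hq.1.le (R₁.card_le_univ.trans_eq (Fintype.card_fin m))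
    (he_pos i hi q) hR₂

/-- Equivalence of the two forms of the FDR replicability procedure: thresholding the
FDR r-values `rᵢ` at level `q` selects exactly the features selected by the step-up
procedure determined by `R₂`, the largest `r ∈ {1,…,m}` such that exactly `r` features
`j ∈ R₁` satisfy `p₁ⱼ ≤ r·c₁(q)q/m` and `p₂ⱼ ≤ r·c₂q/|R₁|` (with `R₂ = 0` if no such
`r` exists). -/
theorem stmt4 (m : ℕ) (hm : 1 ≤ m) (R₁ : Finset (Fin m)) (hR₁ : R₁.Nonempty)
    (p₁ p₂ : Fin m → ℝ)
    (hp₁ : ∀ j ∈ R₁, p₁ j ∈ Ioc (0:ℝ) 1) (hp₂ : ∀ j ∈ R₁, p₂ j ∈ Ioc (0:ℝ) 1)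
    (l₀₀ c₂ : ℝ) (hl : l₀₀ ∈ Ico (0:ℝ) 1) (hc : c₂ ∈ Ioo (0:ℝ) 1)
    (q : ℝ) (hq : q ∈ Ioo (0:ℝ) 1)
    (c₁ : ℝ → ℝ) (hc₁ : ∀ x, c₁ x = (1 - c₂) / (1 - l₀₀ * (1 - c₂ * x)))
    (e : Fin m → ℝ → ℝ)
    (he : ∀ j x, e j x = max (p₁ j / c₁ x) ((R₁.card : ℝ) * p₂ j / ((m : ℝ) * c₂)))
    (rank : Fin m → ℝ → ℕ)
    (hrank : ∀ j x, rank j x = (R₁.filter (fun i => e i x ≤ e j x)).card)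
    (f : Fin m → ℝ → ℝ)
    (hf : ∀ i ∈ R₁, ∀ x : ℝ,
      IsLeast ((R₁.filter (fun j => e i x ≤ e j x)).image
        (fun j => e j x * (m : ℝ) / (rank j x : ℝ)) : Set ℝ) (f i x))
    (r : Fin m → ℝ)
    (hr : ∀ i ∈ R₁,
      (r i ∈ Ioo (0:ℝ) 1 ∧ f i (r i) = r i) ∨
      ((¬ ∃ x ∈ Ioo (0:ℝ) 1, f i x = x) ∧ r i = 1))
    (R₂ : ℕ)
    (hR₂ : (R₂ ∈ Finset.Icc 1 m ∧
        (R₁.filter (fun j => p₁ j ≤ (R₂ : ℝ) * c₁ q * q / (m : ℝ) ∧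
          p₂ j ≤ (R₂ : ℝ) * c₂ * q / (R₁.card : ℝ))).card = R₂ ∧
        (∀ s ∈ Finset.Icc 1 m,
          (R₁.filter (fun j => p₁ j ≤ (s : ℝ) * c₁ q * q / (m : ℝ) ∧
            p₂ j ≤ (s : ℝ) * c₂ * q / (R₁.card : ℝ))).card = s → s ≤ R₂)) ∨
      (R₂ = 0 ∧ ∀ s ∈ Finset.Icc 1 m,
        (R₁.filter (fun j => p₁ j ≤ (s : ℝ) * c₁ q * q / (m : ℝ) ∧
          p₂ j ≤ (s : ℝ) * c₂ * q / (R₁.card : ℝ))).card ≠ s)) :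
    R₁.filter (fun i => r i ≤ q) =
      R₁.filter (fun j => p₁ j ≤ (R₂ : ℝ) * c₁ q * q / (m : ℝ) ∧
        p₂ j ≤ (R₂ : ℝ) * c₂ * q / (R₁.card : ℝ)) :=
  stmt4_general m R₁ p₁ p₂ hp₁ hp₂ l₀₀ c₂ hl hc q hq c₁ hc₁ e he rank hrank f hf r hr R₂ hR₂
end

section
/- Fix an integer m ≥ 1, a nonempty set R₁ ⊆ {1,…,m}, values p₁ⱼ ∈ (0,1] and p₂ⱼ ∈ (0,1] for j ∈ R₁, parameters l₀₀ ∈ [0,1) and c₂ ∈ (0,1). Define c₁(x) = (1−c₂)/(1 − l₀₀(1 − c₂x)); for j ∈ R₁ let eⱼ(x) = max( p₁ⱼ/c₁(x), |R₁|·p₂ⱼ/(m·c₂) ); let rank[eⱼ(x)] be the rank of eⱼ(x) among {eᵢ(x) : i ∈ R₁} (with maximum rank for ties); and let fᵢ(x) = min over {j ∈ R₁ : eⱼ(x) ≥ eᵢ(x)} of eⱼ(x)·m / rank[eⱼ(x)]. Then for each i ∈ R₁ the equation fᵢ(x) = x has at most one solution x ∈ (0,1). -/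
/-!
On `(0, ∞)` every `eⱼ(x)/x = max (p₁ⱼ/(x·c₁(x))) (|R₁|p₂ⱼ/(m c₂ x))` is strictly decreasing,
because `x·c₁(x) = (1 - c₂) / ((1 - l₀₀)/x + l₀₀ c₂)` is strictly increasing. If the minimum
defining `fᵢ(x)` is attained at `j`, let `k` maximise `eₗ(y)` over `{l ∈ R₁ : eₗ(x) ≤ eⱼ(x)}` for
some `y > x`. Then `k` is admissible for `fᵢ(y)`, `eₖ(x) ≤ eⱼ(x)` and `rank k y ≥ rank j x`,
so `fᵢ(y)/y < fᵢ(x)/x`. A fixed point of `fᵢ` is a solution of `fᵢ(x)/x = 1`, hence unique.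
-/

open Set Finset

theorem exists_mem_le_card_filter_le {ι α β : Type*} [LinearOrder α] [LinearOrder β]
    (R : Finset ι) (u : ι → α) (v : ι → β) {i j : ι} (hi : i ∈ R) (hij : u i ≤ u j) :
    ∃ k ∈ R, u k ≤ u j ∧ v i ≤ v k ∧
      (R.filter fun l => u l ≤ u j).card ≤ (R.filter fun l => v l ≤ v k).card := by
  obtain ⟨k, hkT, hk_max⟩ :=
    (R.filter fun l => u l ≤ u j).exists_max_image v ⟨i, mem_filter.mpr ⟨hi, hij⟩⟩
  obtain ⟨hkR, hkj⟩ := mem_filter.mp hkT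
  refine ⟨k, hkR, hkj, hk_max i (mem_filter.mpr ⟨hi, hij⟩), card_le_card fun l hl => ?_⟩
  exact mem_filter.mpr ⟨(mem_filter.mp hl).1, hk_max l hl⟩

theorem strictAntiOn_div_of_isLeast_stepUp {ι : Type*} {s : Set ℝ} (hs : s ⊆ Ioi 0)
    (R : Finset ι) (e : ι → ℝ → ℝ) (rank : ι → ℝ → ℕ)
    (hrank : ∀ j x, rank j x = (R.filter fun l => e l x ≤ e j x).card)
    {M : ℝ} (hM : 0 < M) (he_nonneg : ∀ j ∈ R, ∀ x ∈ s, 0 ≤ e j x)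
    (he_anti : ∀ j ∈ R, StrictAntiOn (fun x => e j x / x) s)
    {i : ι} (hi : i ∈ R) (f : ℝ → ℝ)
    (hf : ∀ x ∈ s, IsLeast ((R.filter fun j => e i x ≤ e j x).image
      (fun j => e j x * M / (rank j x : ℝ)) : Set ℝ) (f x)) :
    StrictAntiOn (fun x => f x / x) s := by
  intro x hx y hy hxy
  obtain ⟨j, hj, hfx⟩ := mem_image.mp (hf x hx).1
  obtain ⟨hjR, hij⟩ := mem_filter.mp hj
  obtain ⟨k, hkR, hkj, hik, hrank_le⟩ :=
    exists_mem_le_card_filter_le R (e · x) (e · y) hi hij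
  have hx₀ : 0 < x := mem_Ioi.mp (hs hx)
  have hy₀ : 0 < y := mem_Ioi.mp (hs hy)
  have hrank_j : 0 < (rank j x : ℝ) := by
    rw [hrank]
    exact Nat.cast_pos.mpr (card_pos.mpr ⟨j, mem_filter.mpr ⟨hjR, le_rfl⟩⟩)
  have hrank_jk : (rank j x : ℝ) ≤ rank k y := by
    rw [hrank, hrank]
    exact_mod_cast hrank_le
  have hfy : f y ≤ e k y * M / rank k y :=
    (hf y hy).2 (mem_image_of_mem _ (mem_filter.mpr ⟨hkR, hik⟩))
  calc f y / y ≤ e k y * M / rank k y / y := div_le_div_of_nonneg_right hfy hy₀.le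
    _ = e k y / y * (M / rank k y) := by ring
    _ < e k x / x * (M / rank k y) :=
      mul_lt_mul_of_pos_right (he_anti k hkR hx hy hxy) (div_pos hM (hrank_j.trans_le hrank_jk))
    _ ≤ e j x / x * (M / rank j x) :=
      mul_le_mul (div_le_div_of_nonneg_right hkj hx₀.le)
        (div_le_div_of_nonneg_left hM.le hrank_j hrank_jk) (by positivity)
        (div_nonneg (he_nonneg j hjR x hx) hx₀.le)
    _ = f x / x := by rw [← hfx]; ring

theorem StrictAntiOn.eq_of_apply_eq_self_s5 {g : ℝ → ℝ} {s : Set ℝ}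
    (hg : StrictAntiOn (fun x => g x / x) s) (hs : s ⊆ Ioi 0) {x y : ℝ} (hx : x ∈ s)
    (hy : y ∈ s) (hgx : g x = x) (hgy : g y = y) : x = y :=
  hg.injOn hx hy <| by
    simp only [hgx, hgy, div_self (mem_Ioi.mp (hs hx)).ne', div_self (mem_Ioi.mp (hs hy)).ne']

theorem strictMonoOn_mul_div_one_sub_mul {l c : ℝ} (hl : l ∈ Ico (0 : ℝ) 1)
    (hc : c ∈ Ioo (0 : ℝ) 1) :
    StrictMonoOn (fun x => x * ((1 - c) / (1 - l * (1 - c * x)))) (Ioi 0) := by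
  intro x (hx : 0 < x) y (hy : 0 < y) hxy
  have hden : ∀ z : ℝ, 0 < z → 0 < 1 - l * (1 - c * z) := fun z hz => by
    nlinarith [mul_nonneg hl.1 (mul_pos hc.1 hz).le, hl.2]
  simp only [← mul_div_assoc]
  rw [div_lt_div_iff₀ (hden x hx) (hden y hy)]
  nlinarith [mul_pos (mul_pos (sub_pos.2 hc.2) (sub_pos.2 hl.2)) (sub_pos.2 hxy)]

theorem strictAntiOn_max_div_div {c : ℝ → ℝ} (hc : StrictMonoOn (fun x => x * c x) (Ioi 0))
    (hc_pos : ∀ x ∈ Ioi (0 : ℝ), 0 < c x) {p C : ℝ} (hp : 0 < p) (hC : 0 < C) :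
    StrictAntiOn (fun x => max (p / c x) C / x) (Ioi 0) := by
  intro x (hx : 0 < x) y (hy : 0 < y) hxy
  simp only [← max_div_div_right hx.le, ← max_div_div_right hy.le, div_div, mul_comm (c _)]
  refine max_lt (lt_max_of_lt_left ?_) (lt_max_of_lt_right ?_)
  · exact div_lt_div_of_pos_left hp (mul_pos hx (hc_pos x hx)) (hc hx hy hxy)
  · exact div_lt_div_of_pos_left hC hx hxy

theorem stmt5_general (m : ℕ) (hm : 1 ≤ m) (R₁ : Finset (Fin m))
    (p₁ p₂ : Fin m → ℝ)
    (hp₁ : ∀ j ∈ R₁, p₁ j ∈ Ioc (0:ℝ) 1) (hp₂ : ∀ j ∈ R₁, p₂ j ∈ Ioc (0:ℝ) 1)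
    (l₀₀ c₂ : ℝ) (hl : l₀₀ ∈ Ico (0:ℝ) 1) (hc : c₂ ∈ Ioo (0:ℝ) 1)
    (c₁ : ℝ → ℝ) (hc₁ : ∀ x, c₁ x = (1 - c₂) / (1 - l₀₀ * (1 - c₂ * x)))
    (e : Fin m → ℝ → ℝ)
    (he : ∀ j x, e j x = max (p₁ j / c₁ x) ((R₁.card : ℝ) * p₂ j / ((m : ℝ) * c₂)))
    (rank : Fin m → ℝ → ℕ)
    (hrank : ∀ j x, rank j x = (R₁.filter (fun i => e i x ≤ e j x)).card)
    (f : Fin m → ℝ → ℝ)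
    (hf : ∀ i ∈ R₁, ∀ x : ℝ,
      IsLeast ((R₁.filter (fun j => e i x ≤ e j x)).image
        (fun j => e j x * (m : ℝ) / (rank j x : ℝ)) : Set ℝ) (f i x)) :
    ∀ i ∈ R₁, ∀ x ∈ Ioo (0:ℝ) 1, ∀ y ∈ Ioo (0:ℝ) 1, f i x = x → f i y = y → x = y := by
  intro i hi x hx y hy hfx hfy
  obtain rfl : c₁ = _ := funext hc₁
  have hc₁_pos : ∀ x ∈ Ioi (0 : ℝ), 0 < (1 - c₂) / (1 - l₀₀ * (1 - c₂ * x)) := fun x hx =>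
    div_pos (sub_pos.2 hc.2) (by nlinarith [mul_nonneg hl.1 (mul_pos hc.1 hx).le, hl.2])
  have hC : ∀ j ∈ R₁, 0 < (R₁.card : ℝ) * p₂ j / ((m : ℝ) * c₂) := fun j hj =>
    div_pos (mul_pos (by exact_mod_cast card_pos.mpr ⟨j, hj⟩) (hp₂ j hj).1)
      (mul_pos (by exact_mod_cast hm) hc.1)
  have he_anti : ∀ j ∈ R₁, StrictAntiOn (fun x => e j x / x) (Ioi 0) := fun j hj => by
    simpa only [he] using strictAntiOn_max_div_div (strictMonoOn_mul_div_one_sub_mul hl hc)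
      hc₁_pos (hp₁ j hj).1 (hC j hj)
  have he_nonneg : ∀ j ∈ R₁, ∀ x ∈ Ioi (0 : ℝ), 0 ≤ e j x := fun j hj x _ =>
    (he j x).symm ▸ (hC j hj).le.trans (le_max_right _ _)
  have hf_anti : StrictAntiOn (fun x => f i x / x) (Ioi 0) :=
    strictAntiOn_div_of_isLeast_stepUp subset_rfl R₁ e rank hrank (by exact_mod_cast hm)
      he_nonneg he_anti hi (f i) fun x _ => hf i hi x
  exact hf_anti.eq_of_apply_eq_self_s5 subset_rfl hx.1 hy.1 hfx hfy

/-- For each selected feature `i ∈ R₁`, the FDR r-value function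
`fᵢ(x) = min_{j ∈ R₁ : eⱼ(x) ≥ eᵢ(x)} eⱼ(x)·m/rank[eⱼ(x)]` has at most one fixed point
in `(0,1)`, where `eⱼ(x) = max(p₁ⱼ/c₁(x), |R₁|p₂ⱼ/(mc₂))` and `rank[eⱼ(x)]` is the rank
of `eⱼ(x)` among `{eᵢ(x) : i ∈ R₁}` with maximum rank for ties. -/
theorem stmt5 (m : ℕ) (hm : 1 ≤ m) (R₁ : Finset (Fin m)) (hR₁ : R₁.Nonempty)
    (p₁ p₂ : Fin m → ℝ)
    (hp₁ : ∀ j ∈ R₁, p₁ j ∈ Ioc (0:ℝ) 1) (hp₂ : ∀ j ∈ R₁, p₂ j ∈ Ioc (0:ℝ) 1)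
    (l₀₀ c₂ : ℝ) (hl : l₀₀ ∈ Ico (0:ℝ) 1) (hc : c₂ ∈ Ioo (0:ℝ) 1)
    (c₁ : ℝ → ℝ) (hc₁ : ∀ x, c₁ x = (1 - c₂) / (1 - l₀₀ * (1 - c₂ * x)))
    (e : Fin m → ℝ → ℝ)
    (he : ∀ j x, e j x = max (p₁ j / c₁ x) ((R₁.card : ℝ) * p₂ j / ((m : ℝ) * c₂)))
    (rank : Fin m → ℝ → ℕ)
    (hrank : ∀ j x, rank j x = (R₁.filter (fun i => e i x ≤ e j x)).card)
    (f : Fin m → ℝ → ℝ)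
    (hf : ∀ i ∈ R₁, ∀ x : ℝ,
      IsLeast ((R₁.filter (fun j => e i x ≤ e j x)).image
        (fun j => e j x * (m : ℝ) / (rank j x : ℝ)) : Set ℝ) (f i x)) :
    ∀ i ∈ R₁, ∀ x ∈ Ioo (0:ℝ) 1, ∀ y ∈ Ioo (0:ℝ) 1, f i x = x → f i y = y → x = y :=
  stmt5_general m hm R₁ p₁ p₂ hp₁ hp₂ l₀₀ c₂ hl hc c₁ hc₁ e he rank hrank f hf
end

section
/- Under the replicability setup with the directional FWER replicability procedure at level α ∈ (0,1), assume that l₀₀ ≤ f₀₀ and that for every feature j with H_j ∉ {(1,1),(−1,−1)}, the follow-up p-value P_{2j}^L is independent of the vector of primary-study p-values (P_{11}^L,…,P_{1m}^L). Then the directional FWER for replicability analysis satisfies Pr(R − S > 0) ≤ α. -/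
open MeasureTheory ProbabilityTheory Set

section Replicability

variable {Ω : Type} {m : ℕ}

/-- `c₁(x) = (1−c₂)/(1 − l₀₀(1 − c₂x))`. -/
noncomputable def c1 (l00 c2 x : ℝ) : ℝ := (1 - c2) / (1 - l00 * (1 - c2 * x))

/-- The primary-study one-sided p-value in the direction favoured by the primary study:
`p'₁ⱼ = min(P₁ⱼᴸ, P₁ⱼᴿ)` where `P₁ⱼᴿ = 1 − P₁ⱼᴸ`. -/
noncomputable def p1' (P1L : Fin m → Ω → ℝ) (j : Fin m) (ω : Ω) : ℝ :=
  min (P1L j ω) (1 - P1L j ω)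

/-- The follow-up study one-sided p-value in the direction favoured by the primary study:
`p'₂ⱼ = P₂ⱼᴸ` if `P₁ⱼᴸ < P₁ⱼᴿ` and `p'₂ⱼ = P₂ⱼᴿ = 1 − P₂ⱼᴸ` otherwise. -/
noncomputable def p2' (P1L P2L : Fin m → Ω → ℝ) (j : Fin m) (ω : Ω) : ℝ :=
  if P1L j ω < 1 - P1L j ω then P2L j ω else 1 - P2L j ω

/-- The set `R₁` of features selected for follow-up, a function of the primary-study
left-sided p-values. -/
def R1set (sel : (Fin m → ℝ) → Finset (Fin m)) (P1L : Fin m → Ω → ℝ) (ω : Ω) :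
    Finset (Fin m) := sel (fun i => P1L i ω)

/-- A replicability claim is made for feature `j` if `j` is selected, `p'₁ⱼ ≤ a`
and `p'₂ⱼ ≤ b/|R₁|`. -/
def Claim (sel : (Fin m → ℝ) → Finset (Fin m)) (P1L P2L : Fin m → Ω → ℝ)
    (a b : ℝ) (j : Fin m) (ω : Ω) : Prop :=
  j ∈ R1set sel P1L ω ∧ p1' P1L j ω ≤ a ∧
    p2' P1L P2L j ω ≤ b / ((R1set sel P1L ω).card : ℝ)

open Classical in
/-- Indicator of a left-direction replicability claim for feature `j`. -/
noncomputable def RjL (sel : (Fin m → ℝ) → Finset (Fin m)) (P1L P2L : Fin m → Ω → ℝ)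
    (a b : ℝ) (j : Fin m) (ω : Ω) : ℕ :=
  if Claim sel P1L P2L a b j ω ∧ P1L j ω < 1 - P1L j ω then 1 else 0

open Classical in
/-- Indicator of a right-direction replicability claim for feature `j`. -/
noncomputable def RjR (sel : (Fin m → ℝ) → Finset (Fin m)) (P1L P2L : Fin m → Ω → ℝ)
    (a b : ℝ) (j : Fin m) (ω : Ω) : ℕ :=
  if Claim sel P1L P2L a b j ω ∧ ¬ (P1L j ω < 1 - P1L j ω) then 1 else 0

/-- `R`, the total number of replicability claims. -/
noncomputable def Rtot (sel : (Fin m → ℝ) → Finset (Fin m)) (P1L P2L : Fin m → Ω → ℝ)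
    (a b : ℝ) (ω : Ω) : ℕ :=
  ∑ j : Fin m, (RjL sel P1L P2L a b j ω + RjR sel P1L P2L a b j ω)

/-- `S`, the number of true directional replicability claims. -/
noncomputable def Stot (H1 H2 : Fin m → ℤ) (sel : (Fin m → ℝ) → Finset (Fin m))
    (P1L P2L : Fin m → Ω → ℝ) (a b : ℝ) (ω : Ω) : ℕ :=
  ∑ j ∈ Finset.univ.filter (fun j => H1 j = 1 ∧ H2 j = 1), RjR sel P1L P2L a b j ω +
  ∑ j ∈ Finset.univ.filter (fun j => H1 j = -1 ∧ H2 j = -1), RjL sel P1L P2L a b j ω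

end Replicability

/-!
Every false claim at a feature `j` is charged either to the primary or to the follow-up study.
A claim charged to the primary study forces the primary p-value, in a direction where it is
super-uniform, to be at most `c₁(α)α/m`; only one direction per feature is charged this way, and
none when `Hⱼ = (0,0)`, so at most `(1 - l₀₀)m` features contribute. A claim charged to the
follow-up study has its follow-up p-value in the claimed direction super-uniform and independent
of the primary study, hence of `R₁` and of the chosen direction. Given `R₁ = s`, each of the `|s|`
selected features is tested at level `c₂α/|s|`, so these claims cost at most `c₂α` altogether.
Finally `(1 - l₀₀) m · c₁(α)α/m + c₂α ≤ α` by the choice of `c₁`.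
-/

section SuperUniform

variable {Ω : Type*} [MeasurableSpace Ω] {μ : Measure Ω} [IsProbabilityMeasure μ] {X : Ω → ℝ}

def SuperUniform (μ : Measure Ω) (X : Ω → ℝ) : Prop :=
  ∀ t ∈ Icc (0:ℝ) 1, μ {ω | X ω ≤ t} ≤ ENNReal.ofReal t

theorem SuperUniform.measure_le (h : SuperUniform μ X) {t : ℝ} (ht : 0 ≤ t) :
    μ {ω | X ω ≤ t} ≤ ENNReal.ofReal t := by
  rcases le_or_gt t 1 with h1 | h1
  · exact h t ⟨ht, h1⟩
  · exact prob_le_one.trans (ENNReal.one_le_ofReal.2 h1.le)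

theorem superUniform_one_sub (hX : Measurable X)
    (h : ∀ t ∈ Icc (0:ℝ) 1, μ {ω | X ω ≤ t} = ENNReal.ofReal t) :
    SuperUniform μ (fun ω => 1 - X ω) := by
  rintro t ⟨ht0, -⟩
  refine ENNReal.le_of_forall_pos_le_add fun ε _ _ => ?_
  rw [← ENNReal.ofReal_coe_nnreal, ← ENNReal.ofReal_add ht0 ε.coe_nonneg]
  rcases lt_or_ge (1 - t - ε) 0 with hneg | hpos
  · exact prob_le_one.trans (ENNReal.one_le_ofReal.2 (by linarith))
  -- only non-strict tail bounds are known, so `X ≥ 1 - t` is approached through `X > 1 - t - ε`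
  calc μ {ω | 1 - X ω ≤ t} ≤ μ {ω | X ω ≤ 1 - t - ε}ᶜ :=
        measure_mono fun ω hω => by simp only [mem_ofPred_eq, mem_compl_iff, not_le] at *; linarith
    _ = 1 - μ {ω | X ω ≤ 1 - t - ε} := prob_compl_eq_one_sub (hX measurableSet_Iic)
    _ = 1 - ENNReal.ofReal (1 - t - ε) := by rw [h _ ⟨hpos, by linarith⟩]
    _ ≤ ENNReal.ofReal (t + ε) := by
        rw [tsub_le_iff_right, ← ENNReal.ofReal_add (by linarith) hpos]
        exact ENNReal.one_le_ofReal.2 (by linarith)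

theorem superUniform_of_trichotomy {h : ℤ} (hh : h = -1 ∨ h = 0 ∨ h = 1) (hX : Measurable X)
    (null : h = 0 → ∀ t ∈ Icc (0:ℝ) 1, μ {ω | X ω ≤ t} = ENNReal.ofReal t)
    (right : h = 1 → SuperUniform μ X) (left : h = -1 → SuperUniform μ (fun ω => 1 - X ω)) :
    (h ≠ -1 → SuperUniform μ X) ∧ (h ≠ 1 → SuperUniform μ (fun ω => 1 - X ω)) := by
  rcases hh with rfl | rfl | rfl
  · exact ⟨absurd rfl, fun _ => left rfl⟩
  · exact ⟨fun _ t ht => (null rfl t ht).le, fun _ => superUniform_one_sub hX (null rfl)⟩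
  · exact ⟨fun _ => right rfl, absurd rfl⟩

end SuperUniform

section Selection

variable {Ω E ι : Type*} [MeasurableSpace Ω] [MeasurableSpace E] {μ : Measure Ω}
  {V : Ω → E} {D L : Set E} {Q : Ω → ℝ}

def CondSuperUniform (μ : Measure Ω) (V : Ω → E) (D : Set E) (Q : Ω → ℝ) : Prop :=
  ∀ A ⊆ D, MeasurableSet A → ∀ t ∈ Icc (0:ℝ) 1,
    μ (V ⁻¹' A ∩ {ω | Q ω ≤ t}) ≤ μ (V ⁻¹' A) * ENNReal.ofReal t

theorem condSuperUniform_empty : CondSuperUniform μ V ∅ Q := by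
  intro A hA _ t _
  simp [subset_empty_iff.1 hA]

theorem SuperUniform.condSuperUniform (h : SuperUniform μ Q) (hind : IndepFun Q V μ) :
    CondSuperUniform μ V D Q := by
  intro A _ hA t ht
  calc μ (V ⁻¹' A ∩ {ω | Q ω ≤ t}) = μ (Q ⁻¹' Iic t ∩ V ⁻¹' A) := by rw [inter_comm]; rfl
    _ = μ (Q ⁻¹' Iic t) * μ (V ⁻¹' A) :=
        hind.measure_inter_preimage_eq_mul _ _ measurableSet_Iic hA
    _ ≤ μ (V ⁻¹' A) * ENNReal.ofReal t := by rw [mul_comm]; gcongr; exact h t ht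

theorem CondSuperUniform.piecewise (hV : Measurable V) (hL : MeasurableSet L) {Q₁ Q₂ : Ω → ℝ}
    (h₁ : CondSuperUniform μ V (D ∩ L) Q₁) (h₂ : CondSuperUniform μ V (D \ L) Q₂)
    (hQ₁ : ∀ ω, V ω ∈ L → Q ω = Q₁ ω) (hQ₂ : ∀ ω, V ω ∉ L → Q ω = Q₂ ω) :
    CondSuperUniform μ V D Q := by
  intro A hAD hA t ht
  have hsplit : V ⁻¹' A ∩ {ω | Q ω ≤ t} ⊆
      (V ⁻¹' (A ∩ L) ∩ {ω | Q₁ ω ≤ t}) ∪ (V ⁻¹' (A \ L) ∩ {ω | Q₂ ω ≤ t}) := by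
    rintro ω ⟨hωA, hωt⟩
    by_cases hωL : V ω ∈ L
    · exact Or.inl ⟨⟨hωA, hωL⟩, (hQ₁ ω hωL ▸ hωt : Q₁ ω ≤ t)⟩
    · exact Or.inr ⟨⟨hωA, hωL⟩, (hQ₂ ω hωL ▸ hωt : Q₂ ω ≤ t)⟩
  calc μ (V ⁻¹' A ∩ {ω | Q ω ≤ t})
      ≤ μ (V ⁻¹' (A ∩ L) ∩ {ω | Q₁ ω ≤ t}) + μ (V ⁻¹' (A \ L) ∩ {ω | Q₂ ω ≤ t}) :=
        (measure_mono hsplit).trans (measure_union_le _ _)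
    _ ≤ μ (V ⁻¹' (A ∩ L)) * ENNReal.ofReal t + μ (V ⁻¹' (A \ L)) * ENNReal.ofReal t :=
        add_le_add (h₁ _ (inter_subset_inter_left L hAD) (hA.inter hL) t ht)
          (h₂ _ (sdiff_subset_sdiff_left hAD) (hA.diff hL) t ht)
    _ = μ (V ⁻¹' A) * ENNReal.ofReal t := by
        rw [← add_mul, preimage_inter, preimage_sdiff, measure_inter_add_sdiff _ (hV hL)]

theorem card_mul_ofReal_div_card_le (s : Finset ι) (b : ℝ) :
    (s.card : ENNReal) * ENNReal.ofReal (b / s.card) ≤ ENNReal.ofReal b := by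
  rcases Nat.eq_zero_or_pos s.card with h0 | hpos
  · simp [h0]
  · rw [← ENNReal.ofReal_natCast, ← ENNReal.ofReal_mul (Nat.cast_nonneg _),
      mul_div_cancel₀ _ (by positivity)]

theorem sum_measure_selected_le [IsProbabilityMeasure μ] [Fintype ι] (hV : Measurable V)
    {sel : E → Finset ι} (hsel : Measurable[_, ⊤] sel) {D : ι → Set E}
    (hD : ∀ j, MeasurableSet (D j)) {Q : ι → Ω → ℝ} (hQ : ∀ j, CondSuperUniform μ V (D j) (Q j))
    {b : ℝ} (hb0 : 0 ≤ b) (hb1 : b ≤ 1) :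
    ∑ j, μ {ω | V ω ∈ D j ∧ j ∈ sel (V ω) ∧ Q j ω ≤ b / (sel (V ω)).card} ≤
      ENNReal.ofReal b := by
  classical
  set F : Finset ι → Set Ω := fun s => V ⁻¹' (sel ⁻¹' {s})
  have hF : ∀ s, MeasurableSet (F s) := fun s => hV (hsel trivial)
  have hF_sum : ∑ s, μ (F s) = 1 :=
    (sum_measure_preimage_singleton Finset.univ fun s _ => hF s).trans (by simp)
  have hj : ∀ j, μ {ω | V ω ∈ D j ∧ j ∈ sel (V ω) ∧ Q j ω ≤ b / (sel (V ω)).card} ≤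
      ∑ s ∈ Finset.univ.filter (j ∈ ·), μ (F s) * ENNReal.ofReal (b / s.card) := by
    intro j
    have hcover : {ω | V ω ∈ D j ∧ j ∈ sel (V ω) ∧ Q j ω ≤ b / (sel (V ω)).card} ⊆
        ⋃ s ∈ Finset.univ.filter (j ∈ ·), V ⁻¹' (D j ∩ sel ⁻¹' {s}) ∩ {ω | Q j ω ≤ b / s.card} :=
      fun ω ⟨hωD, hωsel, hωQ⟩ => mem_iUnion₂.2 ⟨sel (V ω), by simpa using hωsel, ⟨hωD, rfl⟩, hωQ⟩
    refine (measure_mono hcover).trans ((measure_biUnion_finset_le _ _).trans ?_)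
    refine Finset.sum_le_sum fun s hs => ?_
    have hcard : (1 : ℝ) ≤ s.card := by
      exact_mod_cast Finset.card_pos.2 ⟨j, (Finset.mem_filter.1 hs).2⟩
    calc μ (V ⁻¹' (D j ∩ sel ⁻¹' {s}) ∩ {ω | Q j ω ≤ b / s.card})
        ≤ μ (V ⁻¹' (D j ∩ sel ⁻¹' {s})) * ENNReal.ofReal (b / s.card) :=
          hQ j _ inter_subset_left ((hD j).inter (hsel trivial)) _
            ⟨div_nonneg hb0 (by linarith), (div_le_self hb0 hcard).trans hb1⟩
      _ ≤ μ (F s) * ENNReal.ofReal (b / s.card) := by gcongr; exact inter_subset_right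
  calc ∑ j, μ {ω | V ω ∈ D j ∧ j ∈ sel (V ω) ∧ Q j ω ≤ b / (sel (V ω)).card}
      ≤ ∑ j, ∑ s ∈ Finset.univ.filter (j ∈ ·), μ (F s) * ENNReal.ofReal (b / s.card) :=
        Finset.sum_le_sum fun j _ => hj j
    _ = ∑ s, ∑ _j ∈ s, μ (F s) * ENNReal.ofReal (b / s.card) :=
        Finset.sum_comm' (by simp)
    _ ≤ ∑ s, μ (F s) * ENNReal.ofReal b := by
        refine Finset.sum_le_sum fun s _ => ?_
        rw [Finset.sum_const, nsmul_eq_mul, mul_left_comm]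
        gcongr
        exact card_mul_ofReal_div_card_le s b
    _ = ENNReal.ofReal b := by
        rw [← Finset.sum_mul, hF_sum, one_mul]

end Selection

section Procedure

variable {Ω : Type} {m : ℕ}

def primaryVec (P1L : Fin m → Ω → ℝ) (ω : Ω) : Fin m → ℝ := fun i => P1L i ω

def leftDir (j : Fin m) : Set (Fin m → ℝ) := {v | v j < 1 - v j}

theorem measurableSet_leftDir (j : Fin m) : MeasurableSet (leftDir j) :=
  measurableSet_lt (measurable_pi_apply j) (measurable_const.sub (measurable_pi_apply j))

/-- The primary outcomes `v` for which a claim at `j` in the direction chosen by `v` is charged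
to the follow-up study. -/
def followUpDomain (H1 H2 : Fin m → ℤ) (j : Fin m) : Set (Fin m → ℝ) :=
  (leftDir j).ite {_v | ¬((H1 j = 1 ∧ H2 j = 1) ∨ (H1 j = -1 ∧ H2 j = -1)) ∧ H2 j ≠ -1}
    {_v | ¬((H1 j = 1 ∧ H2 j = 1) ∨ (H1 j = -1 ∧ H2 j = -1)) ∧ H2 j ≠ 1}

theorem measurableSet_followUpDomain (H1 H2 : Fin m → ℤ) (j : Fin m) :
    MeasurableSet (followUpDomain H1 H2 j) :=
  (measurableSet_leftDir j).ite (.const _) (.const _)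

def followUpErrorEvent (H1 H2 : Fin m → ℤ) (sel : (Fin m → ℝ) → Finset (Fin m))
    (P1L P2L : Fin m → Ω → ℝ) (b : ℝ) (j : Fin m) : Set Ω :=
  {ω | primaryVec P1L ω ∈ followUpDomain H1 H2 j ∧ j ∈ sel (primaryVec P1L ω) ∧
    p2' P1L P2L j ω ≤ b / (sel (primaryVec P1L ω)).card}

def primaryErrorEvent (H1 H2 : Fin m → ℤ) (P1L : Fin m → Ω → ℝ) (a : ℝ)
    (j : Fin m) : Set Ω :=
  if H1 j = 1 ∨ (H1 j = 0 ∧ H2 j = -1) then {ω | P1L j ω ≤ a}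
  else if H1 j = -1 ∨ (H1 j = 0 ∧ H2 j = 1) then {ω | 1 - P1L j ω ≤ a}
  else ∅

variable {H1 H2 : Fin m → ℤ} {sel : (Fin m → ℝ) → Finset (Fin m)} {P1L P2L : Fin m → Ω → ℝ}
  {a b : ℝ} {ω : Ω}

theorem exists_false_claim_of_lt (h : Stot H1 H2 sel P1L P2L a b ω < Rtot sel P1L P2L a b ω) :
    ∃ j, Claim sel P1L P2L a b j ω ∧
      ((P1L j ω < 1 - P1L j ω ∧ ¬(H1 j = -1 ∧ H2 j = -1)) ∨
        (¬(P1L j ω < 1 - P1L j ω) ∧ ¬(H1 j = 1 ∧ H2 j = 1))) := by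
  by_contra! hnone
  refine h.not_ge (le_of_eq ?_)
  have hR : ∑ j ∈ Finset.univ.filter (fun j => H1 j = 1 ∧ H2 j = 1), RjR sel P1L P2L a b j ω =
      ∑ j, RjR sel P1L P2L a b j ω :=
    Finset.sum_filter_of_ne fun j _ hj => by
      simp only [RjR, ne_eq, ite_eq_right_iff, one_ne_zero, imp_false, not_not] at hj
      exact (hnone j hj.1).2 (not_lt.1 hj.2)
  have hL : ∑ j ∈ Finset.univ.filter (fun j => H1 j = -1 ∧ H2 j = -1), RjL sel P1L P2L a b j ω =
      ∑ j, RjL sel P1L P2L a b j ω :=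
    Finset.sum_filter_of_ne fun j _ hj => by
      simp only [RjL, ne_eq, ite_eq_right_iff, one_ne_zero, imp_false, not_not] at hj
      exact (hnone j hj.1).1 hj.2
  rw [Rtot, Stot, hR, hL, Finset.sum_add_distrib, add_comm]

theorem mem_errorEvents_of_false_claim {j : Fin m} (hH1 : H1 j = -1 ∨ H1 j = 0 ∨ H1 j = 1)
    (hH2 : H2 j = -1 ∨ H2 j = 0 ∨ H2 j = 1) (hclaim : Claim sel P1L P2L a b j ω)
    (hfalse : (P1L j ω < 1 - P1L j ω ∧ ¬(H1 j = -1 ∧ H2 j = -1)) ∨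
      (¬(P1L j ω < 1 - P1L j ω) ∧ ¬(H1 j = 1 ∧ H2 j = 1))) :
    ω ∈ primaryErrorEvent H1 H2 P1L a j ∪ followUpErrorEvent H1 H2 sel P1L P2L b j := by
  obtain ⟨hsel, hp1, hp2⟩ := hclaim
  rcases hfalse with ⟨hdir, hne⟩ | ⟨hdir, hne⟩
  · by_cases hX : H1 j = 1 ∨ (H1 j = 0 ∧ H2 j = -1)
    · left
      rw [primaryErrorEvent, if_pos hX]
      rwa [p1', min_eq_left hdir.le] at hp1
    · refine Or.inr ⟨Or.inl ⟨?_, hdir⟩, hsel, hp2⟩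
      show ¬((H1 j = 1 ∧ H2 j = 1) ∨ (H1 j = -1 ∧ H2 j = -1)) ∧ H2 j ≠ -1
      omega
  · by_cases hY : ¬((H1 j = 1 ∧ H2 j = 1) ∨ (H1 j = -1 ∧ H2 j = -1)) ∧ H2 j ≠ 1
    · exact Or.inr ⟨Or.inr ⟨hY, hdir⟩, hsel, hp2⟩
    · left
      rw [primaryErrorEvent, if_neg (by omega), if_pos (by omega)]
      rwa [p1', min_eq_right (not_lt.1 hdir)] at hp1

theorem errorEvent_subset (hH1 : ∀ j, H1 j = -1 ∨ H1 j = 0 ∨ H1 j = 1)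
    (hH2 : ∀ j, H2 j = -1 ∨ H2 j = 0 ∨ H2 j = 1) :
    {ω | Stot H1 H2 sel P1L P2L a b ω < Rtot sel P1L P2L a b ω} ⊆
      ⋃ j, primaryErrorEvent H1 H2 P1L a j ∪ followUpErrorEvent H1 H2 sel P1L P2L b j :=
  fun _ hω =>
    let ⟨j, hclaim, hfalse⟩ := exists_false_claim_of_lt hω
    mem_iUnion.2 ⟨j, mem_errorEvents_of_false_claim (hH1 j) (hH2 j) hclaim hfalse⟩

variable [MeasurableSpace Ω] {μ : Measure Ω}

theorem measure_errorEvent_le (hH1 : ∀ j, H1 j = -1 ∨ H1 j = 0 ∨ H1 j = 1)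
    (hH2 : ∀ j, H2 j = -1 ∨ H2 j = 0 ∨ H2 j = 1) :
    μ {ω | Stot H1 H2 sel P1L P2L a b ω < Rtot sel P1L P2L a b ω} ≤
      ∑ j, μ (primaryErrorEvent H1 H2 P1L a j) +
        ∑ j, μ (followUpErrorEvent H1 H2 sel P1L P2L b j) := by
  rw [← Finset.sum_add_distrib]
  exact (measure_mono (errorEvent_subset hH1 hH2)).trans ((measure_iUnion_fintype_le _ _).trans
    (Finset.sum_le_sum fun j _ => measure_union_le _ _))

theorem measure_primaryErrorEvent_le [IsProbabilityMeasure μ] {j : Fin m}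
    (hSU1L : H1 j ≠ -1 → SuperUniform μ (P1L j))
    (hSU1R : H1 j ≠ 1 → SuperUniform μ (fun ω => 1 - P1L j ω)) (ha : 0 ≤ a) :
    μ (primaryErrorEvent H1 H2 P1L a j) ≤
      if H1 j = 0 ∧ H2 j = 0 then 0 else ENNReal.ofReal a := by
  unfold primaryErrorEvent
  by_cases hX : H1 j = 1 ∨ (H1 j = 0 ∧ H2 j = -1)
  · rw [if_pos hX, if_neg (by omega)]
    exact (hSU1L (by omega)).measure_le ha
  by_cases hY : H1 j = -1 ∨ (H1 j = 0 ∧ H2 j = 1)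
  · rw [if_neg hX, if_pos hY, if_neg (by omega)]
    exact (hSU1R (by omega)).measure_le ha
  · rw [if_neg hX, if_neg hY, measure_empty]
    exact zero_le

theorem condSuperUniform_p2' (hP1 : ∀ i, Measurable (P1L i)) {j : Fin m}
    (hSU2L : H2 j ≠ -1 → SuperUniform μ (P2L j))
    (hSU2R : H2 j ≠ 1 → SuperUniform μ (fun ω => 1 - P2L j ω))
    (hind : ¬((H1 j = 1 ∧ H2 j = 1) ∨ (H1 j = -1 ∧ H2 j = -1)) →
      IndepFun (P2L j) (primaryVec P1L) μ) :
    CondSuperUniform μ (primaryVec P1L) (followUpDomain H1 H2 j) (p2' P1L P2L j) := by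
  refine CondSuperUniform.piecewise (measurable_pi_lambda _ hP1) (measurableSet_leftDir j)
    (Q₁ := P2L j) (Q₂ := fun ω => 1 - P2L j ω) ?_ ?_ (fun ω h => if_pos h) (fun ω h => if_neg h)
  · rw [followUpDomain, ite_inter_self]
    by_cases hc : ¬((H1 j = 1 ∧ H2 j = 1) ∨ (H1 j = -1 ∧ H2 j = -1)) ∧ H2 j ≠ -1
    · exact (hSU2L hc.2).condSuperUniform (hind hc.1)
    · simpa only [hc, ofPred_false, empty_inter] using condSuperUniform_empty
  · rw [followUpDomain, ite_sdiff_self]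
    by_cases hc : ¬((H1 j = 1 ∧ H2 j = 1) ∨ (H1 j = -1 ∧ H2 j = -1)) ∧ H2 j ≠ 1
    · exact (hSU2R hc.2).condSuperUniform
        ((hind hc.1).comp (measurable_const.sub measurable_id) measurable_id)
    · simpa only [hc, ofPred_false, empty_sdiff] using condSuperUniform_empty

theorem sum_measure_primaryErrorEvent_le [IsProbabilityMeasure μ]
    (hSU1L : ∀ j, H1 j ≠ -1 → SuperUniform μ (P1L j))
    (hSU1R : ∀ j, H1 j ≠ 1 → SuperUniform μ (fun ω => 1 - P1L j ω)) (ha : 0 ≤ a) :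
    ∑ j, μ (primaryErrorEvent H1 H2 P1L a j) ≤
      (Finset.univ.filter (fun j => ¬(H1 j = 0 ∧ H2 j = 0))).card * ENNReal.ofReal a := by
  calc ∑ j, μ (primaryErrorEvent H1 H2 P1L a j)
      ≤ ∑ j, if H1 j = 0 ∧ H2 j = 0 then 0 else ENNReal.ofReal a :=
        Finset.sum_le_sum fun j _ => measure_primaryErrorEvent_le (hSU1L j) (hSU1R j) ha
    _ = _ := by rw [Finset.sum_ite, Finset.sum_const_zero, zero_add, Finset.sum_const, nsmul_eq_mul]

theorem sum_measure_followUpErrorEvent_le [IsProbabilityMeasure μ] (hP1 : ∀ i, Measurable (P1L i))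
    (hsel : Measurable[_, ⊤] sel) (hSU2L : ∀ j, H2 j ≠ -1 → SuperUniform μ (P2L j))
    (hSU2R : ∀ j, H2 j ≠ 1 → SuperUniform μ (fun ω => 1 - P2L j ω))
    (hind : ∀ j, ¬((H1 j = 1 ∧ H2 j = 1) ∨ (H1 j = -1 ∧ H2 j = -1)) →
      IndepFun (P2L j) (primaryVec P1L) μ) (hb0 : 0 ≤ b) (hb1 : b ≤ 1) :
    ∑ j, μ (followUpErrorEvent H1 H2 sel P1L P2L b j) ≤ ENNReal.ofReal b :=
  sum_measure_selected_le (measurable_pi_lambda _ hP1) hsel (measurableSet_followUpDomain H1 H2)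
    (fun j => condSuperUniform_p2' hP1 (hSU2L j) (hSU2R j) (hind j)) hb0 hb1

end Procedure

theorem c1_denom_pos {l00 c2 α : ℝ} (hl0 : 0 ≤ l00) (hl1 : l00 < 1) (hc2 : 0 ≤ c2)
    (hα : 0 ≤ α) : 0 < 1 - l00 * (1 - c2 * α) := by
  nlinarith [mul_nonneg hl0 (mul_nonneg hc2 hα)]

theorem nat_mul_c1_div_add_le {n k m : ℕ} (hnk : n + k = m) {l00 c2 α : ℝ} (hl0 : 0 ≤ l00)
    (hl1 : l00 < 1) (hc20 : 0 ≤ c2) (hc21 : c2 ≤ 1) (hα : 0 ≤ α) (hk : l00 ≤ k / m) :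
    n * (c1 l00 c2 α * α / m) + c2 * α ≤ α := by
  have hD := c1_denom_pos hl0 hl1 hc20 hα
  have hnkR : (n : ℝ) + k = m := by exact_mod_cast hnk
  have hk' : l00 * m ≤ k := mul_le_of_le_div₀ (Nat.cast_nonneg _) (Nat.cast_nonneg _) hk
  have hn : (n : ℝ) ≤ (1 - l00 * (1 - c2 * α)) * m := by
    nlinarith [mul_nonneg (mul_nonneg hl0 (mul_nonneg hc20 hα)) (Nat.cast_nonneg (α := ℝ) m)]
  have hnc1 : n * c1 l00 c2 α ≤ (1 - c2) * m := by
    rw [c1, mul_div_assoc', div_le_iff₀ hD]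
    nlinarith [mul_le_mul_of_nonneg_left hn (sub_nonneg.2 hc21)]
  have hprimary : n * (c1 l00 c2 α * α / m) ≤ (1 - c2) * α := by
    rw [← mul_div_assoc, ← mul_assoc]
    refine div_le_of_le_mul₀ (Nat.cast_nonneg _) (mul_nonneg (sub_nonneg.2 hc21) hα) ?_
    nlinarith [mul_le_mul_of_nonneg_right hnc1 hα]
  linarith

theorem stmt7_general
    {Ω : Type} [MeasureSpace Ω] [IsProbabilityMeasure (ℙ : Measure Ω)]
    -- the number of features
    (m : ℕ)
    -- the hypothesis configuration H_j = (H1 j, H2 j) ∈ {-1,0,1}²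
    (H1 H2 : Fin m → ℤ)
    (hH1 : ∀ j, H1 j = -1 ∨ H1 j = 0 ∨ H1 j = 1)
    (hH2 : ∀ j, H2 j = -1 ∨ H2 j = 0 ∨ H2 j = 1)
    -- the left-sided p-values of the two studies (the right-sided ones are 1 - P1L, 1 - P2L)
    (P1L P2L : Fin m → Ω → ℝ)
    (measP1 : ∀ j, Measurable (P1L j)) (measP2 : ∀ j, Measurable (P2L j))
    -- null p-values are uniform
    (unif1 : ∀ j, H1 j = 0 → ∀ t ∈ Icc (0:ℝ) 1, ℙ {ω | P1L j ω ≤ t} = ENNReal.ofReal t)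
    (unif2 : ∀ j, H2 j = 0 → ∀ t ∈ Icc (0:ℝ) 1, ℙ {ω | P2L j ω ≤ t} = ENNReal.ofReal t)
    -- under a true right-sided (resp. left-sided) alternative, the left-sided (resp.
    -- right-sided) p-value is stochastically larger than or equal to uniform
    (stoch1R : ∀ j, H1 j = 1 → ∀ t ∈ Icc (0:ℝ) 1, ℙ {ω | P1L j ω ≤ t} ≤ ENNReal.ofReal t)
    (stoch2R : ∀ j, H2 j = 1 → ∀ t ∈ Icc (0:ℝ) 1, ℙ {ω | P2L j ω ≤ t} ≤ ENNReal.ofReal t)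
    (stoch1L : ∀ j, H1 j = -1 →
      ∀ t ∈ Icc (0:ℝ) 1, ℙ {ω | 1 - P1L j ω ≤ t} ≤ ENNReal.ofReal t)
    (stoch2L : ∀ j, H2 j = -1 →
      ∀ t ∈ Icc (0:ℝ) 1, ℙ {ω | 1 - P2L j ω ≤ t} ≤ ENNReal.ofReal t)
    -- the selection rule: a measurable, nonempty-set-valued function of the primary p-values
    (sel : (Fin m → ℝ) → Finset (Fin m))
    (selMeas : @Measurable (Fin m → ℝ) (Finset (Fin m)) _ ⊤ sel)
    -- the parameters l₀₀ ∈ [0,1) and c₂ ∈ (0,1)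
    (l00 c2 : ℝ) (hl00 : l00 ∈ Ico (0:ℝ) 1) (hc2 : c2 ∈ Ioo (0:ℝ) 1)
    -- the level of the procedure
    (α : ℝ) (hα : α ∈ Ioo (0:ℝ) 1)
    -- l₀₀ ≤ f₀₀
    (hf00 : l00 ≤ ((Finset.univ.filter (fun j => H1 j = 0 ∧ H2 j = 0)).card : ℝ) / (m : ℝ))
    -- for features with H_j ∉ {(1,1),(−1,−1)}, the follow-up p-value is independent of
    -- the vector of primary-study p-values
    (indep : ∀ j, ¬ ((H1 j = 1 ∧ H2 j = 1) ∨ (H1 j = -1 ∧ H2 j = -1)) →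
      IndepFun (P2L j) (fun ω => fun i => P1L i ω) ℙ) :
    ℙ {ω | Stot H1 H2 sel P1L P2L (c1 l00 c2 α * α / (m : ℝ)) (c2 * α) ω <
        Rtot sel P1L P2L (c1 l00 c2 α * α / (m : ℝ)) (c2 * α) ω} ≤ ENNReal.ofReal α := by
  obtain ⟨hl0, hl1⟩ := hl00
  obtain ⟨hc20, hc21⟩ := hc2
  obtain ⟨hα0, hα1⟩ := hα
  set a := c1 l00 c2 α * α / m
  set b := c2 * α
  set N := (Finset.univ.filter (fun j => ¬(H1 j = 0 ∧ H2 j = 0))).card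
  have ha : 0 ≤ a := div_nonneg (mul_nonneg (div_nonneg (by linarith)
    (c1_denom_pos hl0 hl1 hc20.le hα0.le).le) hα0.le) (Nat.cast_nonneg _)
  have hb : 0 ≤ b := by positivity
  have hP1 j := superUniform_of_trichotomy (hH1 j) (measP1 j) (unif1 j) (stoch1R j) (stoch1L j)
  have hP2 j := superUniform_of_trichotomy (hH2 j) (measP2 j) (unif2 j) (stoch2R j) (stoch2L j)
  have hcard : N + (Finset.univ.filter (fun j => H1 j = 0 ∧ H2 j = 0)).card = m := by
    rw [add_comm, Finset.card_filter_add_card_filter_not, Finset.card_univ, Fintype.card_fin]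
  calc _ ≤ ∑ j, ℙ (primaryErrorEvent H1 H2 P1L a j) +
          ∑ j, ℙ (followUpErrorEvent H1 H2 sel P1L P2L b j) := measure_errorEvent_le hH1 hH2
    _ ≤ N * ENNReal.ofReal a + ENNReal.ofReal b :=
        add_le_add (sum_measure_primaryErrorEvent_le (hP1 · |>.1) (hP1 · |>.2) ha)
          (sum_measure_followUpErrorEvent_le measP1 selMeas (hP2 · |>.1) (hP2 · |>.2) indep hb
            (mul_le_one₀ hc21.le hα0.le hα1.le))
    _ = ENNReal.ofReal (N * a + b) := by
        rw [ENNReal.ofReal_add (by positivity) hb, ENNReal.ofReal_mul (Nat.cast_nonneg _),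
          ENNReal.ofReal_natCast]
    _ ≤ ENNReal.ofReal α := ENNReal.ofReal_le_ofReal
        (nat_mul_c1_div_add_le hcard hl0 hl1 hc20.le hc21.le hα0.le hf00)

/-- Theorem 2 of the paper: the directional FWER replicability procedure at level `α`
controls the directional FWER for replicability analysis at level `α`, provided
`l₀₀ ≤ f₀₀` and, for features `j` with `H_j ∉ {(1,1),(−1,−1)}`, the follow-up p-value
is independent of the primary-study p-values. -/
theorem stmt7
    {Ω : Type} [MeasureSpace Ω] [IsProbabilityMeasure (ℙ : Measure Ω)]
    -- the number of features
    (m : ℕ) (hm : 1 ≤ m)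
    -- the hypothesis configuration H_j = (H1 j, H2 j) ∈ {-1,0,1}²
    (H1 H2 : Fin m → ℤ)
    (hH1 : ∀ j, H1 j = -1 ∨ H1 j = 0 ∨ H1 j = 1)
    (hH2 : ∀ j, H2 j = -1 ∨ H2 j = 0 ∨ H2 j = 1)
    -- the left-sided p-values of the two studies (the right-sided ones are 1 - P1L, 1 - P2L)
    (P1L P2L : Fin m → Ω → ℝ)
    (measP1 : ∀ j, Measurable (P1L j)) (measP2 : ∀ j, Measurable (P2L j))
    (range1 : ∀ j ω, P1L j ω ∈ Icc (0:ℝ) 1) (range2 : ∀ j ω, P2L j ω ∈ Icc (0:ℝ) 1)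
    (neHalf : ∀ j, ∀ᵐ ω ∂ℙ, P1L j ω ≠ 1/2)
    -- null p-values are uniform
    (unif1 : ∀ j, H1 j = 0 → ∀ t ∈ Icc (0:ℝ) 1, ℙ {ω | P1L j ω ≤ t} = ENNReal.ofReal t)
    (unif2 : ∀ j, H2 j = 0 → ∀ t ∈ Icc (0:ℝ) 1, ℙ {ω | P2L j ω ≤ t} = ENNReal.ofReal t)
    -- under a true right-sided (resp. left-sided) alternative, the left-sided (resp.
    -- right-sided) p-value is stochastically larger than or equal to uniform
    (stoch1R : ∀ j, H1 j = 1 → ∀ t ∈ Icc (0:ℝ) 1, ℙ {ω | P1L j ω ≤ t} ≤ ENNReal.ofReal t)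
    (stoch2R : ∀ j, H2 j = 1 → ∀ t ∈ Icc (0:ℝ) 1, ℙ {ω | P2L j ω ≤ t} ≤ ENNReal.ofReal t)
    (stoch1L : ∀ j, H1 j = -1 →
      ∀ t ∈ Icc (0:ℝ) 1, ℙ {ω | 1 - P1L j ω ≤ t} ≤ ENNReal.ofReal t)
    (stoch2L : ∀ j, H2 j = -1 →
      ∀ t ∈ Icc (0:ℝ) 1, ℙ {ω | 1 - P2L j ω ≤ t} ≤ ENNReal.ofReal t)
    -- the selection rule: a measurable, nonempty-set-valued function of the primary p-values
    (sel : (Fin m → ℝ) → Finset (Fin m))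
    (selMeas : @Measurable (Fin m → ℝ) (Finset (Fin m)) _ ⊤ sel)
    (selNonempty : ∀ p, (sel p).Nonempty)
    -- the parameters l₀₀ ∈ [0,1) and c₂ ∈ (0,1)
    (l00 c2 : ℝ) (hl00 : l00 ∈ Ico (0:ℝ) 1) (hc2 : c2 ∈ Ioo (0:ℝ) 1)
    -- the level of the procedure
    (α : ℝ) (hα : α ∈ Ioo (0:ℝ) 1)
    -- l₀₀ ≤ f₀₀
    (hf00 : l00 ≤ ((Finset.univ.filter (fun j => H1 j = 0 ∧ H2 j = 0)).card : ℝ) / (m : ℝ))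
    -- for features with H_j ∉ {(1,1),(−1,−1)}, the follow-up p-value is independent of
    -- the vector of primary-study p-values
    (indep : ∀ j, ¬ ((H1 j = 1 ∧ H2 j = 1) ∨ (H1 j = -1 ∧ H2 j = -1)) →
      IndepFun (P2L j) (fun ω => fun i => P1L i ω) ℙ) :
    ℙ {ω | Stot H1 H2 sel P1L P2L (c1 l00 c2 α * α / (m : ℝ)) (c2 * α) ω <
        Rtot sel P1L P2L (c1 l00 c2 α * α / (m : ℝ)) (c2 * α) ω} ≤ ENNReal.ofReal α :=
  stmt7_general m H1 H2 hH1 hH2 P1L P2L measP1 measP2 unif1 unif2 stoch1R stoch2R stoch1L stoch2L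
    sel selMeas l00 c2 hl00 hc2 α hα hf00 indep
end

section
/- Under the replicability setup with the directional FWER replicability procedure at level α ∈ (0,1), assume that for every feature j with H_j ∉ {(1,1),(−1,−1)}, the follow-up p-value P_{2j}^L is independent of the vector of primary-study p-values (P_{11}^L,…,P_{1m}^L). Then Pr(R − S > 0) ≤ c₁(α)c₂α²·#{j : H_j ∈ {(−1,0),(1,0),(0,0)}}/m + c₁(α)α·#{j : H_j ∈ {(0,1),(0,−1),(−1,−1),(1,1),(−1,1),(1,−1)}}/m + c₂α·E[ |R₁ ∩ {j : H_j ∈ {(−1,0),(1,0),(−1,1),(1,−1),(0,1),(0,−1),(0,0)}}| / |R₁| ]. -/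
open MeasureTheory ProbabilityTheory Set

/-!
Every claim counted by `R - S` is a claim on some `j` in a direction other than the common
direction of `H_{1j}` and `H_{2j}`, so a union bound reduces the theorem to a single feature.
A claim in a given direction needs the primary and the follow-up p-value in that direction to be
small. If the primary one is super-uniform, this has probability at most `c₁(α)α/m`. If the
follow-up one is super-uniform and independent of the primary p-values, conditioning on the value
`r` of `R₁` bounds it by `c₂α/|r|`, hence by `c₂α 𝔼[1{j ∈ R₁}/|R₁|]` overall. When `H_{2j} = 0`
both directions are of the second kind and split the event according to the primary direction,
so together they still cost only `c₂α 𝔼[1{j ∈ R₁}/|R₁|]`; for the other configurations each wrong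
direction is covered by one of the two bounds. Summing over `j` gives the bound, because
`∑_{j ∈ C} 1{j ∈ R₁} = |R₁ ∩ C|` for the set `C` of features with `H_j ∉ {(1,1),(−1,−1)}`;
the term `c₁(α)c₂α²·(…)` is not needed.
-/

open scoped ENNReal

section SuperUniform

variable {Ω β κ : Type*} [MeasurableSpace Ω]

def IsSuperUniform (μ : Measure Ω) (Q : Ω → ℝ) : Prop :=
  ∀ t ∈ Icc (0 : ℝ) 1, μ {ω | Q ω ≤ t} ≤ ENNReal.ofReal t

variable {μ : Measure Ω} {Q X : Ω → ℝ}

theorem isSuperUniform_of_ne_neg_one {H : ℤ} (hH : H = -1 ∨ H = 0 ∨ H = 1)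
    (hu : H = 0 → ∀ t ∈ Icc (0 : ℝ) 1, μ {ω | X ω ≤ t} = ENNReal.ofReal t)
    (hs : H = 1 → IsSuperUniform μ X) (hne : H ≠ -1) : IsSuperUniform μ X :=
  (hH.resolve_left hne).elim (fun h0 t ht => (hu h0 t ht).le) hs

variable [IsProbabilityMeasure μ]

theorem IsSuperUniform.measure_le (hQ : IsSuperUniform μ Q) {c : ℝ} (hc : 0 ≤ c) :
    μ {ω | Q ω ≤ c} ≤ ENNReal.ofReal c := by
  rcases le_or_gt c 1 with hc1 | hc1
  · exact hQ c ⟨hc, hc1⟩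
  · exact prob_le_one.trans (ENNReal.one_le_ofReal.2 hc1.le)

theorem isSuperUniform_one_sub (hX : Measurable X)
    (hu : ∀ t ∈ Icc (0 : ℝ) 1, μ {ω | X ω ≤ t} = ENNReal.ofReal t) :
    IsSuperUniform μ fun ω => 1 - X ω := by
  intro t ht
  rcases ht.2.eq_or_lt with rfl | ht1
  · simpa using prob_le_one
  refine ENNReal.le_of_forall_pos_le_add fun ε hε _ => ?_
  -- `{1 - X ≤ t}` misses `{X ≤ 1 - t - δ}`, whose probability is `1 - t - δ`.
  set δ : ℝ := min (1 - t) ε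
  have hδ : 0 < δ := lt_min (by linarith) hε
  have hs : 1 - t - δ ∈ Icc (0 : ℝ) 1 :=
    ⟨by linarith [min_le_left (1 - t) (ε : ℝ)], by linarith [ht.1]⟩
  calc μ {ω | 1 - X ω ≤ t} ≤ μ {ω | X ω ≤ 1 - t - δ}ᶜ :=
        measure_mono fun ω (h : 1 - X ω ≤ t) (h' : X ω ≤ 1 - t - δ) => by linarith
    _ = ENNReal.ofReal (t + δ) := by
        rw [prob_compl_eq_one_sub (measurableSet_le hX measurable_const), hu _ hs,
          ← ENNReal.ofReal_one, ← ENNReal.ofReal_sub _ hs.1]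
        ring_nf
    _ ≤ ENNReal.ofReal t + ε := ENNReal.ofReal_add_le.trans (by
        gcongr
        exact (ENNReal.ofReal_le_ofReal (min_le_right _ _)).trans_eq ENNReal.ofReal_coe_nnreal)

theorem isSuperUniform_one_sub_of_ne_one {H : ℤ} (hH : H = -1 ∨ H = 0 ∨ H = 1)
    (hX : Measurable X) (hu : H = 0 → ∀ t ∈ Icc (0 : ℝ) 1, μ {ω | X ω ≤ t} = ENNReal.ofReal t)
    (hs : H = -1 → IsSuperUniform μ fun ω => 1 - X ω) (hne : H ≠ 1) :
    IsSuperUniform μ fun ω => 1 - X ω := by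
  rcases hH with h | h | h
  exacts [hs h, isSuperUniform_one_sub hX (hu h), absurd h hne]

theorem IsSuperUniform.measure_le_setLIntegral [MeasurableSpace β] [Fintype κ]
    (hQ : IsSuperUniform μ Q) {V : Ω → β} (hV : Measurable V) (hind : IndepFun Q V μ)
    {A : Set β} (hA : MeasurableSet A) {N : β → κ} (hN : @Measurable β κ _ ⊤ N)
    {θ : κ → ℝ} (hθ : ∀ r, 0 ≤ θ r) :
    μ {ω | V ω ∈ A ∧ Q ω ≤ θ (N (V ω))} ≤
      ∫⁻ ω in V ⁻¹' A, ENNReal.ofReal (θ (N (V ω))) ∂μ := by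
  set fiber : κ → Set β := fun r => A ∩ N ⁻¹' {r}
  have hfiber : ∀ r, MeasurableSet (fiber r) := fun r =>
    hA.inter (hN MeasurableSpace.measurableSet_top)
  have hdisj : Pairwise (Function.onFun Disjoint fun r => V ⁻¹' fiber r) := fun r r' h =>
    (((disjoint_singleton.2 h).preimage N).mono inter_subset_right inter_subset_right).preimage V
  -- On the fiber `N ∘ V = r` the level is the constant `θ r`, and independence factorises.
  calc μ {ω | V ω ∈ A ∧ Q ω ≤ θ (N (V ω))}
      ≤ μ (⋃ r, Q ⁻¹' Iic (θ r) ∩ V ⁻¹' fiber r) :=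
        measure_mono fun ω h => mem_iUnion.2 ⟨N (V ω), h.2, h.1, rfl⟩
    _ ≤ ∑ r, μ (Q ⁻¹' Iic (θ r) ∩ V ⁻¹' fiber r) := measure_iUnion_fintype_le _ _
    _ = ∑ r, μ (Q ⁻¹' Iic (θ r)) * μ (V ⁻¹' fiber r) := Finset.sum_congr rfl fun r _ =>
        hind.measure_inter_preimage_eq_mul _ _ measurableSet_Iic (hfiber r)
    _ ≤ ∑ r, ∫⁻ ω in V ⁻¹' fiber r, ENNReal.ofReal (θ (N (V ω))) ∂μ := by
        gcongr with r
        rw [setLIntegral_congr_fun (hV (hfiber r)) fun ω hω => by rw [hω.2], setLIntegral_const]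
        exact mul_le_mul_left (hQ.measure_le (hθ r)) _
    _ = ∫⁻ ω in ⋃ r, V ⁻¹' fiber r, ENNReal.ofReal (θ (N (V ω))) ∂μ := by
        rw [lintegral_iUnion (fun r => hV (hfiber r)) hdisj, tsum_fintype]
    _ = ∫⁻ ω in V ⁻¹' A, ENNReal.ofReal (θ (N (V ω))) ∂μ := by
        rw [← preimage_iUnion, ← inter_iUnion, ← preimage_iUnion, iUnion_of_singleton,
          preimage_univ, inter_univ]

end SuperUniform

theorem c1_pos {l00 c2 x : ℝ} (hl00 : l00 ∈ Ico (0 : ℝ) 1) (hc2 : c2 ∈ Ioo (0 : ℝ) 1)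
    (hx : 0 ≤ x) : 0 < c1 l00 c2 x :=
  div_pos (by linarith [hc2.2])
    (by nlinarith [hl00.2, mul_nonneg hl00.1 (mul_nonneg hc2.1.le hx)])

theorem pair_mem_iff_snd_ne_zero {h1 h2 : ℤ} (hh1 : h1 = -1 ∨ h1 = 0 ∨ h1 = 1)
    (hh2 : h2 = -1 ∨ h2 = 0 ∨ h2 = 1) :
    (h1, h2) ∈ ({(0,1),(0,-1),(-1,-1),(1,1),(-1,1),(1,-1)} : Finset (ℤ × ℤ)) ↔ h2 ≠ 0 := by
  rcases hh1 with rfl | rfl | rfl <;> rcases hh2 with rfl | rfl | rfl <;> decide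

theorem pair_mem_iff_not_concordant {h1 h2 : ℤ} (hh1 : h1 = -1 ∨ h1 = 0 ∨ h1 = 1)
    (hh2 : h2 = -1 ∨ h2 = 0 ∨ h2 = 1) :
    (h1, h2) ∈ ({(-1,0),(1,0),(-1,1),(1,-1),(0,1),(0,-1),(0,0)} : Finset (ℤ × ℤ)) ↔
      ¬(h1 = 1 ∧ h2 = 1 ∨ h1 = -1 ∧ h2 = -1) := by
  rcases hh1 with rfl | rfl | rfl <;> rcases hh2 with rfl | rfl | rfl <;> decide

section Procedure

variable {Ω : Type} {m : ℕ} {H1 H2 : Fin m → ℤ} {sel : (Fin m → ℝ) → Finset (Fin m)}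
  {P1L P2L : Fin m → Ω → ℝ} {a b : ℝ} {j : Fin m} {ω : Ω}

/-- A claim on `j` in a direction other than the common direction of both studies' alternatives;
`R - S` counts exactly these. -/
def falseClaim (H1 H2 : Fin m → ℤ) (sel : (Fin m → ℝ) → Finset (Fin m))
    (P1L P2L : Fin m → Ω → ℝ) (a b : ℝ) (j : Fin m) : Set Ω :=
  {ω | RjL sel P1L P2L a b j ω = 1 ∧ ¬(H1 j = -1 ∧ H2 j = -1) ∨
    RjR sel P1L P2L a b j ω = 1 ∧ ¬(H1 j = 1 ∧ H2 j = 1)}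

theorem RjL_eq_one_iff :
    RjL sel P1L P2L a b j ω = 1 ↔ Claim sel P1L P2L a b j ω ∧ P1L j ω < 1 - P1L j ω := by
  unfold RjL; split_ifs with h
  exacts [iff_of_true rfl h, iff_of_false not_false h]

theorem RjR_eq_one_iff :
    RjR sel P1L P2L a b j ω = 1 ↔ Claim sel P1L P2L a b j ω ∧ ¬P1L j ω < 1 - P1L j ω := by
  unfold RjR; split_ifs with h
  exacts [iff_of_true rfl h, iff_of_false not_false h]

theorem RjL_add_RjR_le_of_notMem_falseClaim (h : ω ∉ falseClaim H1 H2 sel P1L P2L a b j) :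
    RjL sel P1L P2L a b j ω + RjR sel P1L P2L a b j ω ≤
      (if H1 j = 1 ∧ H2 j = 1 then RjR sel P1L P2L a b j ω else 0) +
        (if H1 j = -1 ∧ H2 j = -1 then RjL sel P1L P2L a b j ω else 0) := by
  simp only [falseClaim, mem_ofPred_eq, not_or, not_and] at h
  unfold RjL RjR at *
  split_ifs at * <;> omega

theorem setOf_Stot_lt_Rtot_subset :
    {ω | Stot H1 H2 sel P1L P2L a b ω < Rtot sel P1L P2L a b ω} ⊆
      ⋃ j, falseClaim H1 H2 sel P1L P2L a b j := by
  intro ω hω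
  by_contra h
  simp only [mem_iUnion, not_exists] at h
  have hle : Rtot sel P1L P2L a b ω ≤ Stot H1 H2 sel P1L P2L a b ω := by
    rw [Rtot, Stot, Finset.sum_filter, Finset.sum_filter, ← Finset.sum_add_distrib]
    exact Finset.sum_le_sum fun j _ => RjL_add_RjR_le_of_notMem_falseClaim (h j)
  exact hle.not_gt hω

variable [MeasureSpace Ω]

noncomputable def followupErrorBound (sel : (Fin m → ℝ) → Finset (Fin m))
    (P1L : Fin m → Ω → ℝ) (b : ℝ) (j : Fin m) : ℝ≥0∞ :=
  ∫⁻ ω in {ω | j ∈ R1set sel P1L ω}, ENNReal.ofReal (b / (R1set sel P1L ω).card)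

variable [IsProbabilityMeasure (ℙ : Measure Ω)]

theorem measure_RjL_le_of_primary (hP : IsSuperUniform ℙ (P1L j)) (ha : 0 ≤ a) :
    ℙ {ω | RjL sel P1L P2L a b j ω = 1} ≤ ENNReal.ofReal a := by
  refine (measure_mono fun ω h => ?_).trans (hP.measure_le ha)
  obtain ⟨⟨-, hp1, -⟩, hlt⟩ := RjL_eq_one_iff.1 h
  rwa [p1', min_eq_left hlt.le] at hp1

theorem measure_RjR_le_of_primary (hP : IsSuperUniform ℙ fun ω => 1 - P1L j ω) (ha : 0 ≤ a) :
    ℙ {ω | RjR sel P1L P2L a b j ω = 1} ≤ ENNReal.ofReal a := by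
  refine (measure_mono fun ω h => ?_).trans (hP.measure_le ha)
  obtain ⟨⟨-, hp1, -⟩, hge⟩ := RjR_eq_one_iff.1 h
  rwa [p1', min_eq_right (not_lt.1 hge)] at hp1

theorem measurableSet_lt_one_sub_apply (j : Fin m) :
    MeasurableSet {x : Fin m → ℝ | x j < 1 - x j} :=
  measurableSet_lt (measurable_pi_apply j) (measurable_const.sub (measurable_pi_apply j))

theorem measure_RjL_le_of_followup (hP1meas : ∀ i, Measurable (P1L i))
    (hsel : @Measurable _ (Finset (Fin m)) _ ⊤ sel) (hP : IsSuperUniform ℙ (P2L j))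
    (hind : IndepFun (P2L j) (fun ω i => P1L i ω) ℙ) (hb : 0 ≤ b) :
    ℙ {ω | RjL sel P1L P2L a b j ω = 1} ≤
      ∫⁻ ω in {ω | j ∈ R1set sel P1L ω} ∩ {ω | P1L j ω < 1 - P1L j ω},
        ENNReal.ofReal (b / (R1set sel P1L ω).card) := by
  refine (measure_mono fun ω h => ?_).trans (hP.measure_le_setLIntegral
    (measurable_pi_lambda _ hP1meas) hind
    ((@hsel {r | j ∈ r} MeasurableSpace.measurableSet_top).inter
      (measurableSet_lt_one_sub_apply j)) hsel
    (θ := fun r => b / r.card) fun r => by positivity)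
  obtain ⟨⟨hj, -, hp2⟩, hlt⟩ := RjL_eq_one_iff.1 h
  rw [p2', if_pos hlt] at hp2
  exact ⟨⟨hj, hlt⟩, hp2⟩

theorem measure_RjR_le_of_followup (hP1meas : ∀ i, Measurable (P1L i))
    (hsel : @Measurable _ (Finset (Fin m)) _ ⊤ sel) (hP : IsSuperUniform ℙ fun ω => 1 - P2L j ω)
    (hind : IndepFun (P2L j) (fun ω i => P1L i ω) ℙ) (hb : 0 ≤ b) :
    ℙ {ω | RjR sel P1L P2L a b j ω = 1} ≤
      ∫⁻ ω in {ω | j ∈ R1set sel P1L ω} \ {ω | P1L j ω < 1 - P1L j ω},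
        ENNReal.ofReal (b / (R1set sel P1L ω).card) := by
  refine (measure_mono fun ω h => ?_).trans (hP.measure_le_setLIntegral
    (measurable_pi_lambda _ hP1meas) (hind.comp (measurable_const.sub measurable_id) measurable_id)
    ((@hsel {r | j ∈ r} MeasurableSpace.measurableSet_top).diff
      (measurableSet_lt_one_sub_apply j)) hsel
    (θ := fun r => b / r.card) fun r => by positivity)
  obtain ⟨⟨hj, -, hp2⟩, hge⟩ := RjR_eq_one_iff.1 h
  rw [p2', if_neg hge] at hp2
  exact ⟨⟨hj, hge⟩, hp2⟩

theorem measure_falseClaim_le (hH2 : H2 j = -1 ∨ H2 j = 0 ∨ H2 j = 1)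
    (hP1meas : ∀ i, Measurable (P1L i))
    (hsel : @Measurable _ (Finset (Fin m)) _ ⊤ sel)
    (hP1 : H1 j ≠ -1 → IsSuperUniform ℙ (P1L j))
    (hP1' : H1 j ≠ 1 → IsSuperUniform ℙ fun ω => 1 - P1L j ω)
    (hP2 : H2 j ≠ -1 → IsSuperUniform ℙ (P2L j))
    (hP2' : H2 j ≠ 1 → IsSuperUniform ℙ fun ω => 1 - P2L j ω)
    (hind : ¬(H1 j = 1 ∧ H2 j = 1 ∨ H1 j = -1 ∧ H2 j = -1) →
      IndepFun (P2L j) (fun ω i => P1L i ω) ℙ)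
    (ha : 0 ≤ a) (hb : 0 ≤ b) :
    ℙ (falseClaim H1 H2 sel P1L P2L a b j) ≤
      (if H2 j ≠ 0 then ENNReal.ofReal a else 0) +
        (if ¬(H1 j = 1 ∧ H2 j = 1 ∨ H1 j = -1 ∧ H2 j = -1) then followupErrorBound sel P1L b j
          else 0) := by
  set L := {ω | RjL sel P1L P2L a b j ω = 1}
  set R := {ω | RjR sel P1L P2L a b j ω = 1}
  have hLR : ℙ (falseClaim H1 H2 sel P1L P2L a b j) ≤ ℙ L + ℙ R :=
    (measure_mono fun ω h => h.imp And.left And.left).trans (measure_union_le _ _)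
  have hL hP hind : ℙ L ≤ followupErrorBound sel P1L b j :=
    (measure_RjL_le_of_followup hP1meas hsel hP hind hb).trans
      (lintegral_mono_set inter_subset_left)
  have hR hP hind : ℙ R ≤ followupErrorBound sel P1L b j :=
    (measure_RjR_le_of_followup hP1meas hsel hP hind hb).trans (lintegral_mono_set sdiff_subset)
  rcases hH2 with h2 | h2 | h2
  · rcases eq_or_ne (H1 j) (-1) with h1 | h1
    · have hsub : falseClaim H1 H2 sel P1L P2L a b j ⊆ R := fun ω h =>
        (h.resolve_left fun h' => h'.2 ⟨h1, h2⟩).1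
      simpa [h1, h2] using
        (measure_mono hsub).trans (measure_RjR_le_of_primary (hP1' (by omega)) ha)
    · simpa [h1, h2] using hLR.trans (add_le_add (measure_RjL_le_of_primary (hP1 h1) ha)
        (hR (hP2' (by omega)) (hind (by omega))))
  · have hind := hind (by omega)
    simpa [h2, followupErrorBound, measurableSet_lt_one_sub_apply] using hLR.trans
      ((add_le_add (measure_RjL_le_of_followup hP1meas hsel (hP2 (by omega)) hind hb)
        (measure_RjR_le_of_followup hP1meas hsel (hP2' (by omega)) hind hb)).trans_eq
        (lintegral_inter_add_sdiff _ _ ((measurableSet_lt_one_sub_apply j).preimage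
          (measurable_pi_lambda _ hP1meas))))
  · rcases eq_or_ne (H1 j) 1 with h1 | h1
    · have hsub : falseClaim H1 H2 sel P1L P2L a b j ⊆ L := fun ω h =>
        (h.resolve_right fun h' => h'.2 ⟨h1, h2⟩).1
      simpa [h1, h2] using
        (measure_mono hsub).trans (measure_RjL_le_of_primary (hP1 (by omega)) ha)
    · simpa [h1, h2, add_comm] using hLR.trans (add_le_add
        (hL (hP2 (by omega)) (hind (by omega))) (measure_RjR_le_of_primary (hP1' h1) ha))

theorem sum_followupErrorBound (hP1meas : ∀ i, Measurable (P1L i))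
    (hsel : @Measurable _ (Finset (Fin m)) _ ⊤ sel) (hb : 0 ≤ b) (C : Finset (Fin m)) :
    ∑ j ∈ C, followupErrorBound sel P1L b j =
      ENNReal.ofReal (b * ∫ ω, ((R1set sel P1L ω ∩ C).card : ℝ) / (R1set sel P1L ω).card) := by
  classical
  have hR1set := hsel.comp (measurable_pi_lambda _ hP1meas)
  have hR1 : ∀ g : Finset (Fin m) → ℝ, Measurable fun ω => g (R1set sel P1L ω) := fun g =>
    Measurable.comp (@measurable_from_top (Finset (Fin m)) ℝ _ g) hR1set
  have hmem : ∀ j, MeasurableSet {ω | j ∈ R1set sel P1L ω} := fun j =>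
    hR1set (@MeasurableSpace.measurableSet_top _ {r | j ∈ r})
  have hratio : ∀ ω, 0 ≤ ((R1set sel P1L ω ∩ C).card : ℝ) / (R1set sel P1L ω).card ∧
      ((R1set sel P1L ω ∩ C).card : ℝ) / (R1set sel P1L ω).card ≤ 1 := fun ω =>
    ⟨by positivity, div_le_one_of_le₀
      (Nat.cast_le.2 (Finset.card_le_card Finset.inter_subset_left)) (Nat.cast_nonneg _)⟩
  have hint : Integrable (fun ω => ((R1set sel P1L ω ∩ C).card : ℝ) / (R1set sel P1L ω).card) :=
    .of_bound (hR1 fun r => ((r ∩ C).card : ℝ) / r.card).aestronglyMeasurable 1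
      (ae_of_all _ fun ω => by rw [Real.norm_of_nonneg (hratio ω).1]; exact (hratio ω).2)
  rw [← integral_const_mul, ofReal_integral_eq_lintegral_ofReal (hint.const_mul b)
    (ae_of_all _ fun ω => mul_nonneg hb (hratio ω).1)]
  simp only [followupErrorBound, ← lintegral_indicator (hmem _)]
  rw [← lintegral_finsetSum _ fun j _ =>
    (hR1 fun r => b / r.card).ennreal_ofReal.indicator (hmem j)]
  refine lintegral_congr fun ω => ?_
  simp only [indicator_apply, mem_ofPred_eq]
  rw [Finset.sum_ite_mem, Finset.sum_const, nsmul_eq_mul, Finset.inter_comm,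
    ← ENNReal.ofReal_natCast, ← ENNReal.ofReal_mul (Nat.cast_nonneg _), mul_div_left_comm]

end Procedure

theorem stmt8_general
    {Ω : Type} [MeasureSpace Ω] [IsProbabilityMeasure (ℙ : Measure Ω)]
    -- the number of features
    (m : ℕ)
    -- the hypothesis configuration H_j = (H1 j, H2 j) ∈ {-1,0,1}²
    (H1 H2 : Fin m → ℤ)
    (hH1 : ∀ j, H1 j = -1 ∨ H1 j = 0 ∨ H1 j = 1)
    (hH2 : ∀ j, H2 j = -1 ∨ H2 j = 0 ∨ H2 j = 1)
    -- the left-sided p-values of the two studies (the right-sided ones are 1 - P1L, 1 - P2L)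
    (P1L P2L : Fin m → Ω → ℝ)
    (measP1 : ∀ j, Measurable (P1L j)) (measP2 : ∀ j, Measurable (P2L j))
    -- null p-values are uniform
    (unif1 : ∀ j, H1 j = 0 → ∀ t ∈ Icc (0:ℝ) 1, ℙ {ω | P1L j ω ≤ t} = ENNReal.ofReal t)
    (unif2 : ∀ j, H2 j = 0 → ∀ t ∈ Icc (0:ℝ) 1, ℙ {ω | P2L j ω ≤ t} = ENNReal.ofReal t)
    -- under a true right-sided (resp. left-sided) alternative, the left-sided (resp.
    -- right-sided) p-value is stochastically larger than or equal to uniform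
    (stoch1R : ∀ j, H1 j = 1 → ∀ t ∈ Icc (0:ℝ) 1, ℙ {ω | P1L j ω ≤ t} ≤ ENNReal.ofReal t)
    (stoch2R : ∀ j, H2 j = 1 → ∀ t ∈ Icc (0:ℝ) 1, ℙ {ω | P2L j ω ≤ t} ≤ ENNReal.ofReal t)
    (stoch1L : ∀ j, H1 j = -1 →
      ∀ t ∈ Icc (0:ℝ) 1, ℙ {ω | 1 - P1L j ω ≤ t} ≤ ENNReal.ofReal t)
    (stoch2L : ∀ j, H2 j = -1 →
      ∀ t ∈ Icc (0:ℝ) 1, ℙ {ω | 1 - P2L j ω ≤ t} ≤ ENNReal.ofReal t)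
    -- the selection rule: a measurable, nonempty-set-valued function of the primary p-values
    (sel : (Fin m → ℝ) → Finset (Fin m))
    (selMeas : @Measurable (Fin m → ℝ) (Finset (Fin m)) _ ⊤ sel)
    -- the parameters l₀₀ ∈ [0,1) and c₂ ∈ (0,1)
    (l00 c2 : ℝ) (hl00 : l00 ∈ Ico (0:ℝ) 1) (hc2 : c2 ∈ Ioo (0:ℝ) 1)
    -- the level of the procedure
    (α : ℝ) (hα : α ∈ Ioo (0:ℝ) 1)
    -- for features with H_j ∉ {(1,1),(−1,−1)}, the follow-up p-value is independent of
    -- the vector of primary-study p-values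
    (indep : ∀ j, ¬ ((H1 j = 1 ∧ H2 j = 1) ∨ (H1 j = -1 ∧ H2 j = -1)) →
      IndepFun (P2L j) (fun ω => fun i => P1L i ω) ℙ) :
    (ℙ {ω | Stot H1 H2 sel P1L P2L (c1 l00 c2 α * α / (m : ℝ)) (c2 * α) ω <
        Rtot sel P1L P2L (c1 l00 c2 α * α / (m : ℝ)) (c2 * α) ω}).toReal ≤
      c1 l00 c2 α * c2 * α ^ 2 *
        ((Finset.univ.filter
          (fun j => (H1 j, H2 j) ∈ ({(-1,0),(1,0),(0,0)} : Finset (ℤ × ℤ)))).card : ℝ) /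
          (m : ℝ) +
      c1 l00 c2 α * α *
        ((Finset.univ.filter
          (fun j => (H1 j, H2 j) ∈
            ({(0,1),(0,-1),(-1,-1),(1,1),(-1,1),(1,-1)} : Finset (ℤ × ℤ)))).card : ℝ) /
          (m : ℝ) +
      c2 * α * ∫ ω, (((R1set sel P1L ω ∩ Finset.univ.filter
          (fun j => (H1 j, H2 j) ∈
            ({(-1,0),(1,0),(-1,1),(1,-1),(0,1),(0,-1),(0,0)} : Finset (ℤ × ℤ)))).card : ℝ) /
          ((R1set sel P1L ω).card : ℝ)) ∂ℙ := by
  set a := c1 l00 c2 α * α / (m : ℝ) with ha_def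
  set b := c2 * α
  set B := Finset.univ.filter fun j => (H1 j, H2 j) ∈
    ({(0,1),(0,-1),(-1,-1),(1,1),(-1,1),(1,-1)} : Finset (ℤ × ℤ))
  set C := Finset.univ.filter fun j => (H1 j, H2 j) ∈
    ({(-1,0),(1,0),(-1,1),(1,-1),(0,1),(0,-1),(0,0)} : Finset (ℤ × ℤ))
  set I := ∫ ω, ((R1set sel P1L ω ∩ C).card : ℝ) / (R1set sel P1L ω).card
  have hc1 := c1_pos hl00 hc2 hα.1.le
  have hI : 0 ≤ I := integral_nonneg fun ω => by positivity
  have ha : 0 ≤ a := div_nonneg (mul_nonneg hc1.le hα.1.le) m.cast_nonneg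
  have hb : 0 ≤ b := mul_nonneg hc2.1.le hα.1.le
  have hfeature j := measure_falseClaim_le (hH2 j) measP1 selMeas
    (isSuperUniform_of_ne_neg_one (hH1 j) (unif1 j) (stoch1R j))
    (isSuperUniform_one_sub_of_ne_one (hH1 j) (measP1 j) (unif1 j) (stoch1L j))
    (isSuperUniform_of_ne_neg_one (hH2 j) (unif2 j) (stoch2R j))
    (isSuperUniform_one_sub_of_ne_one (hH2 j) (measP2 j) (unif2 j) (stoch2L j)) (indep j) ha hb
  have hB := Finset.filter_congr (s := Finset.univ) fun j _ =>
    (pair_mem_iff_snd_ne_zero (hH1 j) (hH2 j)).symm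
  have hC := Finset.filter_congr (s := Finset.univ) fun j _ =>
    (pair_mem_iff_not_concordant (hH1 j) (hH2 j)).symm
  have hprob : ℙ {ω | Stot H1 H2 sel P1L P2L a b ω < Rtot sel P1L P2L a b ω} ≤
      ENNReal.ofReal (a * B.card + b * I) := by
    calc _ ≤ ∑ j, ℙ (falseClaim H1 H2 sel P1L P2L a b j) :=
          (measure_mono setOf_Stot_lt_Rtot_subset).trans (measure_iUnion_fintype_le _ _)
      _ ≤ _ := Finset.sum_le_sum fun j _ => hfeature j
      _ = _ := by
        rw [Finset.sum_add_distrib, ← Finset.sum_filter, ← Finset.sum_filter, hB, hC,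
          sum_followupErrorBound measP1 selMeas hb, Finset.sum_const, nsmul_eq_mul,
          ENNReal.ofReal_add (by positivity) (mul_nonneg hb hI),
          ENNReal.ofReal_mul' (Nat.cast_nonneg _), ENNReal.ofReal_natCast, mul_comm]
  have hslack : 0 ≤ c1 l00 c2 α * c2 * α ^ 2 *
      ((Finset.univ.filter fun j => (H1 j, H2 j) ∈
        ({(-1,0),(1,0),(0,0)} : Finset (ℤ × ℤ))).card : ℝ) / (m : ℝ) := by
    have := hc2.1; positivity
  refine (ENNReal.toReal_le_of_le_ofReal (add_nonneg (by positivity) (mul_nonneg hb hI))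
    hprob).trans ?_
  rw [ha_def, div_mul_eq_mul_div]
  linarith

/-- The upper bound (expression (1) of the paper, with `q` replaced by `α`) on the
directional FWER of the level-`α` directional FWER replicability procedure. -/
theorem stmt8
    {Ω : Type} [MeasureSpace Ω] [IsProbabilityMeasure (ℙ : Measure Ω)]
    -- the number of features
    (m : ℕ) (hm : 1 ≤ m)
    -- the hypothesis configuration H_j = (H1 j, H2 j) ∈ {-1,0,1}²
    (H1 H2 : Fin m → ℤ)
    (hH1 : ∀ j, H1 j = -1 ∨ H1 j = 0 ∨ H1 j = 1)
    (hH2 : ∀ j, H2 j = -1 ∨ H2 j = 0 ∨ H2 j = 1)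
    -- the left-sided p-values of the two studies (the right-sided ones are 1 - P1L, 1 - P2L)
    (P1L P2L : Fin m → Ω → ℝ)
    (measP1 : ∀ j, Measurable (P1L j)) (measP2 : ∀ j, Measurable (P2L j))
    (range1 : ∀ j ω, P1L j ω ∈ Icc (0:ℝ) 1) (range2 : ∀ j ω, P2L j ω ∈ Icc (0:ℝ) 1)
    (neHalf : ∀ j, ∀ᵐ ω ∂ℙ, P1L j ω ≠ 1/2)
    -- null p-values are uniform
    (unif1 : ∀ j, H1 j = 0 → ∀ t ∈ Icc (0:ℝ) 1, ℙ {ω | P1L j ω ≤ t} = ENNReal.ofReal t)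
    (unif2 : ∀ j, H2 j = 0 → ∀ t ∈ Icc (0:ℝ) 1, ℙ {ω | P2L j ω ≤ t} = ENNReal.ofReal t)
    -- under a true right-sided (resp. left-sided) alternative, the left-sided (resp.
    -- right-sided) p-value is stochastically larger than or equal to uniform
    (stoch1R : ∀ j, H1 j = 1 → ∀ t ∈ Icc (0:ℝ) 1, ℙ {ω | P1L j ω ≤ t} ≤ ENNReal.ofReal t)
    (stoch2R : ∀ j, H2 j = 1 → ∀ t ∈ Icc (0:ℝ) 1, ℙ {ω | P2L j ω ≤ t} ≤ ENNReal.ofReal t)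
    (stoch1L : ∀ j, H1 j = -1 →
      ∀ t ∈ Icc (0:ℝ) 1, ℙ {ω | 1 - P1L j ω ≤ t} ≤ ENNReal.ofReal t)
    (stoch2L : ∀ j, H2 j = -1 →
      ∀ t ∈ Icc (0:ℝ) 1, ℙ {ω | 1 - P2L j ω ≤ t} ≤ ENNReal.ofReal t)
    -- the selection rule: a measurable, nonempty-set-valued function of the primary p-values
    (sel : (Fin m → ℝ) → Finset (Fin m))
    (selMeas : @Measurable (Fin m → ℝ) (Finset (Fin m)) _ ⊤ sel)
    (selNonempty : ∀ p, (sel p).Nonempty)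
    -- the parameters l₀₀ ∈ [0,1) and c₂ ∈ (0,1)
    (l00 c2 : ℝ) (hl00 : l00 ∈ Ico (0:ℝ) 1) (hc2 : c2 ∈ Ioo (0:ℝ) 1)
    -- the level of the procedure
    (α : ℝ) (hα : α ∈ Ioo (0:ℝ) 1)
    -- for features with H_j ∉ {(1,1),(−1,−1)}, the follow-up p-value is independent of
    -- the vector of primary-study p-values
    (indep : ∀ j, ¬ ((H1 j = 1 ∧ H2 j = 1) ∨ (H1 j = -1 ∧ H2 j = -1)) →
      IndepFun (P2L j) (fun ω => fun i => P1L i ω) ℙ) :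
    (ℙ {ω | Stot H1 H2 sel P1L P2L (c1 l00 c2 α * α / (m : ℝ)) (c2 * α) ω <
        Rtot sel P1L P2L (c1 l00 c2 α * α / (m : ℝ)) (c2 * α) ω}).toReal ≤
      c1 l00 c2 α * c2 * α ^ 2 *
        ((Finset.univ.filter
          (fun j => (H1 j, H2 j) ∈ ({(-1,0),(1,0),(0,0)} : Finset (ℤ × ℤ)))).card : ℝ) /
          (m : ℝ) +
      c1 l00 c2 α * α *
        ((Finset.univ.filter
          (fun j => (H1 j, H2 j) ∈
            ({(0,1),(0,-1),(-1,-1),(1,1),(-1,1),(1,-1)} : Finset (ℤ × ℤ)))).card : ℝ) /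
          (m : ℝ) +
      c2 * α * ∫ ω, (((R1set sel P1L ω ∩ Finset.univ.filter
          (fun j => (H1 j, H2 j) ∈
            ({(-1,0),(1,0),(-1,1),(1,-1),(0,1),(0,-1),(0,0)} : Finset (ℤ × ℤ)))).card : ℝ) /
          ((R1set sel P1L ω).card : ℝ)) ∂ℙ :=
  stmt8_general m H1 H2 hH1 hH2 P1L P2L measP1 measP2 unif1 unif2 stoch1R stoch2R stoch1L stoch2L
    sel selMeas l00 c2 hl00 hc2 α hα indep
end

section
/- Under the replicability setup with the directional FWER replicability procedure at level α ∈ (0,1), for every feature j with H_j = (0,0) such that P_{2j}^L is independent of the vector of primary-study p-values (P_{11}^L,…,P_{1m}^L), it holds that E(R_j^L + R_j^R) ≤ c₂α·E[ 1{j ∈ R₁}/|R₁| ] + (c₁(α)α/m)·c₂α. -/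
/-!
A claim for feature `j` requires, besides `j ∈ R₁`, that the follow-up p-value fall into a
one-sided tail of size `c₂α/|R₁|` whose direction is fixed by the primary study. Given the
primary p-values this tail has probability at most `c₂α/|R₁|`, because `P₂ⱼᴸ` is uniform;
by independence we may integrate this conditional bound over the primary p-values, which gives
`E(R_jᴸ + R_jᴿ) ≤ c₂α·E[1{j ∈ R₁}/|R₁|]`. The second term of the bound is nonnegative slack.
-/

open MeasureTheory ProbabilityTheory Set

open scoped ENNReal

section UniformTail

variable {Ω : Type*} [MeasurableSpace Ω] {μ : Measure Ω} [IsProbabilityMeasure μ] {X : Ω → ℝ}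

theorem measure_le_le_ofReal_of_uniform
    (hX : ∀ t ∈ Icc (0:ℝ) 1, μ {ω | X ω ≤ t} = ENNReal.ofReal t) {t : ℝ} (ht : 0 ≤ t) :
    μ {ω | X ω ≤ t} ≤ ENNReal.ofReal t := by
  rcases le_total t 1 with ht1 | ht1
  · exact (hX t ⟨ht, ht1⟩).le
  · exact prob_le_one.trans (by simpa using ENNReal.ofReal_le_ofReal ht1)

theorem measure_one_sub_le_le_ofReal_of_uniform (hXm : Measurable X)
    (hX : ∀ t ∈ Icc (0:ℝ) 1, μ {ω | X ω ≤ t} = ENNReal.ofReal t) {t : ℝ} (ht : 0 ≤ t) :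
    μ {ω | 1 - X ω ≤ t} ≤ ENNReal.ofReal t := by
  rcases le_total 1 t with ht1 | ht1
  · exact prob_le_one.trans (by simpa using ENNReal.ofReal_le_ofReal ht1)
  have hlt : 1 - t ≤ μ.real {ω | X ω < 1 - t} := by
    refine le_of_forall_sub_le fun e he => ?_
    rcases le_total (1 - t) e with hse | hse
    · exact (sub_nonpos.mpr hse).trans measureReal_nonneg
    calc 1 - t - e = μ.real {ω | X ω ≤ 1 - t - e} := by
          rw [measureReal_def, hX _ ⟨by linarith, by linarith⟩, ENNReal.toReal_ofReal (by linarith)]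
      _ ≤ μ.real {ω | X ω < 1 - t} := measureReal_mono fun ω hω => by
          simp only [mem_ofPred_eq] at hω ⊢; linarith
  have hcompl : {ω | 1 - X ω ≤ t} = {ω | X ω < 1 - t}ᶜ := by
    ext ω; simp only [mem_ofPred_eq, mem_compl_iff, not_lt]; constructor <;> intro h <;> linarith
  rw [← ofReal_measureReal, hcompl, probReal_compl_eq_one_sub (measurableSet_lt hXm measurable_const)]
  exact ENNReal.ofReal_le_ofReal (by linarith)

theorem measure_ite_le_le_ofReal_of_uniform (hXm : Measurable X)
    (hX : ∀ t ∈ Icc (0:ℝ) 1, μ {ω | X ω ≤ t} = ENNReal.ofReal t) (s : Prop) [Decidable s]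
    {t : ℝ} (ht : 0 ≤ t) :
    μ {ω | (if s then X ω else 1 - X ω) ≤ t} ≤ ENNReal.ofReal t := by
  by_cases hs : s
  · simpa only [if_pos hs] using measure_le_le_ofReal_of_uniform hX ht
  · simpa only [if_neg hs] using measure_one_sub_le_le_ofReal_of_uniform hXm hX ht

end UniformTail

theorem ProbabilityTheory.IndepFun.measure_mem_le_lintegral {Ω β γ : Type*} [MeasurableSpace Ω]
    [MeasurableSpace β] [MeasurableSpace γ] {μ : Measure Ω} [IsFiniteMeasure μ]
    {X : Ω → β} {Y : Ω → γ} (hXY : IndepFun X Y μ) (hX : Measurable X) (hY : Measurable Y)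
    {S : Set (β × γ)} (hS : MeasurableSet S) {f : γ → ℝ≥0∞}
    (hf : ∀ y, μ {ω | (X ω, y) ∈ S} ≤ f y) :
    μ {ω | (X ω, Y ω) ∈ S} ≤ ∫⁻ ω, f (Y ω) ∂μ := by
  calc μ {ω | (X ω, Y ω) ∈ S} = μ.map (fun ω => (X ω, Y ω)) S :=
        (Measure.map_apply (hX.prodMk hY) hS).symm
    _ = ∫⁻ y, μ.map X ((fun x => (x, y)) ⁻¹' S) ∂(μ.map Y) := by
        rw [(indepFun_iff_map_prod_eq_prod_map_map hX.aemeasurable hY.aemeasurable).mp hXY,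
          Measure.prod_apply_symm hS]
    _ = ∫⁻ y, μ {ω | (X ω, y) ∈ S} ∂(μ.map Y) := by
        congr 1 with y
        exact Measure.map_apply hX (measurable_prodMk_right hS)
    _ ≤ ∫⁻ y, f y ∂(μ.map Y) := lintegral_mono hf
    _ ≤ ∫⁻ ω, f (Y ω) ∂μ := lintegral_map_le _ _

theorem c1_nonneg {l00 c2 x : ℝ} (hc2 : c2 ≤ 1) (h : l00 * (1 - c2 * x) ≤ 1) :
    0 ≤ c1 l00 c2 x :=
  div_nonneg (by linarith) (by linarith)

section Procedure

variable {Ω : Type} {m : ℕ} (sel : (Fin m → ℝ) → Finset (Fin m)) (j : Fin m)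

def followUpRegion (b : ℝ) : Set (ℝ × (Fin m → ℝ)) :=
  {z | j ∈ sel z.2 ∧ (if z.2 j < 1 - z.2 j then z.1 else 1 - z.1) ≤ b / ((sel z.2).card : ℝ)}

variable {sel j}

theorem claim_iff {P1L P2L : Fin m → Ω → ℝ} {a b : ℝ} {ω : Ω} :
    Claim sel P1L P2L a b j ω ↔
      (P2L j ω, fun i => P1L i ω) ∈ followUpRegion sel j b ∧ p1' P1L j ω ≤ a :=
  ⟨fun ⟨hR, h1, h2⟩ => ⟨⟨hR, h2⟩, h1⟩, fun ⟨⟨hR, h2⟩, h1⟩ => ⟨hR, h1, h2⟩⟩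

theorem measurableSet_followUpRegion (hsel : @Measurable (Fin m → ℝ) (Finset (Fin m)) _ ⊤ sel)
    (b : ℝ) : MeasurableSet (followUpRegion sel j b) := by
  have hS : @Measurable _ _ _ ⊤ fun z : ℝ × (Fin m → ℝ) => sel z.2 := hsel.comp measurable_snd
  have hcard : Measurable fun z : ℝ × (Fin m → ℝ) => ((sel z.2).card : ℝ) :=
    (measurable_from_top (f := fun s : Finset (Fin m) => (s.card : ℝ))).comp hS
  have hdir : Measurable fun z : ℝ × (Fin m → ℝ) =>
      if z.2 j < 1 - z.2 j then z.1 else 1 - z.1 :=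
    Measurable.ite (measurableSet_lt ((measurable_pi_apply j).comp measurable_snd)
        (measurable_const.sub ((measurable_pi_apply j).comp measurable_snd)))
      measurable_fst (measurable_const.sub measurable_fst)
  exact (hS (t := {s | j ∈ s}) trivial).inter
    (measurableSet_le hdir (measurable_const.div hcard))

variable [MeasurableSpace Ω] {P1L P2L : Fin m → Ω → ℝ}

theorem measurableSet_claim (hP1 : ∀ i, Measurable (P1L i)) (hP2 : Measurable (P2L j))
    (hsel : @Measurable (Fin m → ℝ) (Finset (Fin m)) _ ⊤ sel) (a b : ℝ) :
    MeasurableSet {ω | Claim sel P1L P2L a b j ω} := by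
  simp_rw [claim_iff]
  exact ((hP2.prodMk (measurable_pi_lambda _ hP1)) (measurableSet_followUpRegion hsel b)).inter
    (measurableSet_le ((hP1 j).min (measurable_const.sub (hP1 j))) measurable_const)

theorem integral_RjL_add_RjR {μ : Measure Ω} (hP1 : ∀ i, Measurable (P1L i))
    (hP2 : Measurable (P2L j)) (hsel : @Measurable (Fin m → ℝ) (Finset (Fin m)) _ ⊤ sel)
    (a b : ℝ) :
    ∫ ω, ((RjL sel P1L P2L a b j ω : ℝ) + (RjR sel P1L P2L a b j ω : ℝ)) ∂μ =
      μ.real {ω | Claim sel P1L P2L a b j ω} := by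
  rw [← integral_indicator_one (measurableSet_claim hP1 hP2 hsel a b)]
  congr 1 with ω
  by_cases hc : Claim sel P1L P2L a b j ω <;> by_cases hs : P1L j ω < 1 - P1L j ω <;>
    simp [RjL, RjR, hc, hs]

theorem measureReal_claim_le {μ : Measure Ω} [IsProbabilityMeasure μ]
    (hP1 : ∀ i, Measurable (P1L i)) (hP2 : Measurable (P2L j))
    (hunif : ∀ t ∈ Icc (0:ℝ) 1, μ {ω | P2L j ω ≤ t} = ENNReal.ofReal t)
    (hsel : @Measurable (Fin m → ℝ) (Finset (Fin m)) _ ⊤ sel)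
    (hindep : IndepFun (P2L j) (fun ω i => P1L i ω) μ) (a : ℝ) {b : ℝ} (hb : 0 ≤ b) :
    μ.real {ω | Claim sel P1L P2L a b j ω} ≤
      b * ∫ ω, {ω' | j ∈ R1set sel P1L ω'}.indicator
        (fun ω' => 1 / ((R1set sel P1L ω').card : ℝ)) ω ∂μ := by
  set g := {ω' | j ∈ R1set sel P1L ω'}.indicator fun ω' => 1 / ((R1set sel P1L ω').card : ℝ)
  have hY : Measurable fun ω i => P1L i ω := measurable_pi_lambda _ hP1
  have hR : @Measurable _ _ _ ⊤ (R1set sel P1L) := hsel.comp hY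
  have hg : Measurable g :=
    ((measurable_from_top (f := fun s : Finset (Fin m) => 1 / (s.card : ℝ))).comp hR).indicator (hR (t := {s | j ∈ s}) trivial)
  have hg_mem : ∀ ω, g ω ∈ Icc (0:ℝ) 1 := fun ω => by
    by_cases h : ω ∈ {ω' | j ∈ R1set sel P1L ω'}
    · simp only [g, indicator_of_mem h, one_div]
      exact ⟨by positivity, Nat.cast_inv_le_one _⟩
    · simp only [g, indicator_of_notMem h]
      exact ⟨le_rfl, zero_le_one⟩
  have hsection : ∀ y : Fin m → ℝ, μ {ω | (P2L j ω, y) ∈ followUpRegion sel j b} ≤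
      ENNReal.ofReal (b * {y | j ∈ sel y}.indicator (fun y => 1 / ((sel y).card : ℝ)) y) := by
    intro y
    by_cases hy : j ∈ sel y
    · simpa [followUpRegion, hy, indicator_of_mem, div_eq_mul_one_div b] using
        measure_ite_le_le_ofReal_of_uniform hP2 hunif (y j < 1 - y j)
          (div_nonneg hb (Nat.cast_nonneg (sel y).card))
    · simp [followUpRegion, hy]
  have hlintegral : μ {ω | Claim sel P1L P2L a b j ω} ≤ ∫⁻ ω, ENNReal.ofReal (b * g ω) ∂μ :=
    (measure_mono fun ω hω => (claim_iff.mp hω).1).trans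
      (hindep.measure_mem_le_lintegral hP2 hY (measurableSet_followUpRegion hsel b) hsection)
  have hgi : Integrable g μ :=
    .of_bound hg.aestronglyMeasurable 1 (ae_of_all _ fun ω => by
      rw [Real.norm_of_nonneg (hg_mem ω).1]; exact (hg_mem ω).2)
  refine ENNReal.toReal_le_of_le_ofReal
    (mul_nonneg hb (integral_nonneg fun ω => (hg_mem ω).1)) (hlintegral.trans_eq ?_)
  rw [← integral_const_mul, ofReal_integral_eq_lintegral_ofReal (hgi.const_mul b)
    (ae_of_all _ fun ω => mul_nonneg hb (hg_mem ω).1)]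

end Procedure

theorem stmt10_general
    {Ω : Type} [MeasureSpace Ω] [IsProbabilityMeasure (ℙ : Measure Ω)]
    -- the number of features
    (m : ℕ)
    -- the hypothesis configuration H_j = (H1 j, H2 j) ∈ {-1,0,1}²
    (H1 H2 : Fin m → ℤ)
    -- the left-sided p-values of the two studies (the right-sided ones are 1 - P1L, 1 - P2L)
    (P1L P2L : Fin m → Ω → ℝ)
    (measP1 : ∀ j, Measurable (P1L j)) (measP2 : ∀ j, Measurable (P2L j))
    -- null p-values are uniform
    (unif2 : ∀ j, H2 j = 0 → ∀ t ∈ Icc (0:ℝ) 1, ℙ {ω | P2L j ω ≤ t} = ENNReal.ofReal t)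
    -- the selection rule: a measurable, nonempty-set-valued function of the primary p-values
    (sel : (Fin m → ℝ) → Finset (Fin m))
    (selMeas : @Measurable (Fin m → ℝ) (Finset (Fin m)) _ ⊤ sel)
    -- the parameters l₀₀ ∈ [0,1) and c₂ ∈ (0,1)
    (l00 c2 : ℝ) (hl00 : l00 ∈ Ico (0:ℝ) 1) (hc2 : c2 ∈ Ioo (0:ℝ) 1)
    -- the level of the procedure
    (α : ℝ) (hα : α ∈ Ioo (0:ℝ) 1)
    -- a feature with H_j = (0,0) whose follow-up p-value is independent of the
    -- vector of primary-study p-values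
    (j : Fin m) (hj : H1 j = 0 ∧ H2 j = 0)
    (indep : IndepFun (P2L j) (fun ω => fun i => P1L i ω) ℙ) :
    ∫ ω, ((RjL sel P1L P2L (c1 l00 c2 α * α / (m : ℝ)) (c2 * α) j ω : ℝ) +
        (RjR sel P1L P2L (c1 l00 c2 α * α / (m : ℝ)) (c2 * α) j ω : ℝ)) ∂ℙ ≤
      c2 * α * ∫ ω, ({ω' | j ∈ R1set sel P1L ω'}.indicator
          (fun ω' => 1 / ((R1set sel P1L ω').card : ℝ)) ω) ∂ℙ +
        (c1 l00 c2 α * α / (m : ℝ)) * (c2 * α) := by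
  have hb : 0 ≤ c2 * α := mul_nonneg hc2.1.le hα.1.le
  have ha : 0 ≤ c1 l00 c2 α * α / (m : ℝ) := by
    have hden : l00 * (1 - c2 * α) ≤ 1 := by
      nlinarith [hl00.1, hl00.2, mul_pos hc2.1 hα.1, mul_lt_mul'' hc2.2 hα.2 hc2.1.le hα.1.le]
    exact div_nonneg (mul_nonneg (c1_nonneg hc2.2.le hden) hα.1.le) m.cast_nonneg
  rw [integral_RjL_add_RjR measP1 (measP2 j) selMeas]
  calc _ ≤ c2 * α * ∫ ω, ({ω' | j ∈ R1set sel P1L ω'}.indicator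
          (fun ω' => 1 / ((R1set sel P1L ω').card : ℝ)) ω) ∂ℙ :=
        measureReal_claim_le measP1 (measP2 j) (unif2 j hj.2) selMeas indep _ hb
    _ ≤ _ := le_add_of_nonneg_right (mul_nonneg ha hb)

/-- For a feature `j` with `H_j = (0,0)` whose follow-up p-value is independent of the
primary-study p-values, the expected number of replicability claims of the level-`α`
directional FWER replicability procedure is at most
`c₂α·E[1{j ∈ R₁}/|R₁|] + (c₁(α)α/m)·c₂α`. -/
theorem stmt10
    {Ω : Type} [MeasureSpace Ω] [IsProbabilityMeasure (ℙ : Measure Ω)]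
    -- the number of features
    (m : ℕ) (hm : 1 ≤ m)
    -- the hypothesis configuration H_j = (H1 j, H2 j) ∈ {-1,0,1}²
    (H1 H2 : Fin m → ℤ)
    (hH1 : ∀ j, H1 j = -1 ∨ H1 j = 0 ∨ H1 j = 1)
    (hH2 : ∀ j, H2 j = -1 ∨ H2 j = 0 ∨ H2 j = 1)
    -- the left-sided p-values of the two studies (the right-sided ones are 1 - P1L, 1 - P2L)
    (P1L P2L : Fin m → Ω → ℝ)
    (measP1 : ∀ j, Measurable (P1L j)) (measP2 : ∀ j, Measurable (P2L j))
    (range1 : ∀ j ω, P1L j ω ∈ Icc (0:ℝ) 1) (range2 : ∀ j ω, P2L j ω ∈ Icc (0:ℝ) 1)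
    (neHalf : ∀ j, ∀ᵐ ω ∂ℙ, P1L j ω ≠ 1/2)
    -- null p-values are uniform
    (unif1 : ∀ j, H1 j = 0 → ∀ t ∈ Icc (0:ℝ) 1, ℙ {ω | P1L j ω ≤ t} = ENNReal.ofReal t)
    (unif2 : ∀ j, H2 j = 0 → ∀ t ∈ Icc (0:ℝ) 1, ℙ {ω | P2L j ω ≤ t} = ENNReal.ofReal t)
    -- under a true right-sided (resp. left-sided) alternative, the left-sided (resp.
    -- right-sided) p-value is stochastically larger than or equal to uniform
    (stoch1R : ∀ j, H1 j = 1 → ∀ t ∈ Icc (0:ℝ) 1, ℙ {ω | P1L j ω ≤ t} ≤ ENNReal.ofReal t)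
    (stoch2R : ∀ j, H2 j = 1 → ∀ t ∈ Icc (0:ℝ) 1, ℙ {ω | P2L j ω ≤ t} ≤ ENNReal.ofReal t)
    (stoch1L : ∀ j, H1 j = -1 →
      ∀ t ∈ Icc (0:ℝ) 1, ℙ {ω | 1 - P1L j ω ≤ t} ≤ ENNReal.ofReal t)
    (stoch2L : ∀ j, H2 j = -1 →
      ∀ t ∈ Icc (0:ℝ) 1, ℙ {ω | 1 - P2L j ω ≤ t} ≤ ENNReal.ofReal t)
    -- the selection rule: a measurable, nonempty-set-valued function of the primary p-values
    (sel : (Fin m → ℝ) → Finset (Fin m))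
    (selMeas : @Measurable (Fin m → ℝ) (Finset (Fin m)) _ ⊤ sel)
    (selNonempty : ∀ p, (sel p).Nonempty)
    -- the parameters l₀₀ ∈ [0,1) and c₂ ∈ (0,1)
    (l00 c2 : ℝ) (hl00 : l00 ∈ Ico (0:ℝ) 1) (hc2 : c2 ∈ Ioo (0:ℝ) 1)
    -- the level of the procedure
    (α : ℝ) (hα : α ∈ Ioo (0:ℝ) 1)
    -- a feature with H_j = (0,0) whose follow-up p-value is independent of the
    -- vector of primary-study p-values
    (j : Fin m) (hj : H1 j = 0 ∧ H2 j = 0)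
    (indep : IndepFun (P2L j) (fun ω => fun i => P1L i ω) ℙ) :
    ∫ ω, ((RjL sel P1L P2L (c1 l00 c2 α * α / (m : ℝ)) (c2 * α) j ω : ℝ) +
        (RjR sel P1L P2L (c1 l00 c2 α * α / (m : ℝ)) (c2 * α) j ω : ℝ)) ∂ℙ ≤
      c2 * α * ∫ ω, ({ω' | j ∈ R1set sel P1L ω'}.indicator
          (fun ω' => 1 / ((R1set sel P1L ω').card : ℝ)) ω) ∂ℙ +
        (c1 l00 c2 α * α / (m : ℝ)) * (c2 * α) :=
  stmt10_general m H1 H2 P1L P2L measP1 measP2 unif2 sel selMeas l00 c2 hl00 hc2 α hα j hj indep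
end
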